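/- arXiv:1406.6699 — 8 statements merged into one kernel-verified Lean document; each statement's English description precedes it below -/
import Mathlib

section
/- Let G be a finite connected multigraph without loops and consider 'chip-firing' twists: twisting a multidegree w : V(G) → ℤ at a vertex v decreases w(v) by the valence of v and increases w(v') by the number of edges between v and v', for each v' ≠ v. Then two sequences of twists (at vertex multisets S and S') applied to the same starting multidegree w yield the same result if and only if the multisets S and S' differ by a multiple of the full vertex set V(G). -/
/-- Valence (degree) of a vertex of the loopless multigraph with edge multiplicities `m`. -/
def valence {V : Type*} [Fintype V] (m : V → V → ℕ) (v : V) : ℕ := ∑ u, m v u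

/-- Connectedness of the multigraph with edge multiplicities `m`. -/
def MGConnected {V : Type*} (m : V → V → ℕ) : Prop :=
  ∀ u v : V, Relation.ReflTransGen (fun a b => 0 < m a b) u v

/-- The change of a multidegree at `u` caused by the chip-firing twist at the vertex `v`:
`w v` decreases by the valence of `v` and `w u` (for `u ≠ v`) increases by the number of
edges between `v` and `u`. -/
def twistDelta {V : Type*} [Fintype V] [DecidableEq V] (m : V → V → ℕ) (v : V) : V → ℤ :=
  fun u => if u = v then -(valence m v : ℤ) else (m v u : ℤ)

/-- Applying the sequence of twists given by the multiset of vertices `S` (twists at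
distinct vertices commute, so only the multiset matters). -/
def applyTwists {V : Type*} [Fintype V] [DecidableEq V] (m : V → V → ℕ) (w : V → ℤ)
    (S : Multiset V) : V → ℤ :=
  fun u => w u + (S.map (fun v => twistDelta m v u)).sum


section Aux

variable {V : Type*} [Fintype V] [DecidableEq V]

lemma sum_map_count (S : Multiset V) (f : V → ℤ) :
    (S.map f).sum = ∑ v, (S.count v : ℤ) * f v := by
  rw [Finset.sum_multiset_map_count,
    Finset.sum_subset (Finset.subset_univ S.toFinset)]
  · simp [nsmul_eq_mul]
  · intro x _ hx
    simp [Multiset.count_eq_zero_of_notMem (by simpa using hx)]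

lemma lap_rewrite (m : V → V → ℕ) (hsymm : ∀ u v, m u v = m v u) (hloop : ∀ v, m v v = 0)
    (d : V → ℤ) (u : V) :
    ∑ v, d v * twistDelta m v u = ∑ v, (m u v : ℤ) * (d v - d u) := by
  have h1 : ∀ v, d v * twistDelta m v u
      = d v * (m v u : ℤ) - (if v = u then d u * (valence m u : ℤ) else 0) := by
    intro v
    by_cases h : v = u
    · subst h
      simp [twistDelta, hloop]
    · simp [twistDelta, Ne.symm h, h]
  simp only [h1]
  rw [Finset.sum_sub_distrib, Finset.sum_ite_eq' Finset.univ u, if_pos (Finset.mem_univ u)]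
  simp only [mul_sub, Finset.sum_sub_distrib, valence, Finset.mul_sum]
  congr 1
  · exact Finset.sum_congr rfl fun v _ => by rw [hsymm u v, mul_comm]
  · push_cast [Finset.mul_sum]
    exact Finset.sum_congr rfl fun v _ => mul_comm _ _

lemma const_of_lap [Nonempty V] (m : V → V → ℕ) (hconn : MGConnected m) (d : V → ℤ)
    (h : ∀ u, ∑ v, (m u v : ℤ) * (d v - d u) = 0) : ∀ u v, d u = d v := by
  obtain ⟨u0, -, hmax⟩ := Finset.exists_max_image Finset.univ d
    ⟨Classical.arbitrary V, Finset.mem_univ _⟩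
  have step : ∀ a b, d a = d u0 → 0 < m a b → d b = d u0 := by
    intro a b ha hab
    have hle : ∀ v ∈ Finset.univ, (m a v : ℤ) * (d v - d a) ≤ 0 := by
      intro v _
      apply mul_nonpos_of_nonneg_of_nonpos (by positivity)
      rw [ha]
      linarith [hmax v (Finset.mem_univ v)]
    have hz := (Finset.sum_eq_zero_iff_of_nonpos hle).mp (h a) b (Finset.mem_univ b)
    rcases mul_eq_zero.mp hz with h0 | h0
    · exact absurd h0 (by positivity)
    · rw [ha] at h0; linarith
  have reach : ∀ v, d v = d u0 := by
    intro v
    induction hconn u0 v with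
    | refl => rfl
    | tail _ hbc ih => exact step _ _ ih hbc
  intro u v
  rw [reach u, reach v]

lemma sum_delta_count (m : V → V → ℕ) (w : V → ℤ) (S : Multiset V) (u : V) :
    applyTwists m w S u = w u + ∑ v, (S.count v : ℤ) * twistDelta m v u := by
  rw [applyTwists, sum_map_count]

end Aux

/-- Two sequences of chip-firing twists applied to the same multidegree on a finite
connected loopless multigraph yield the same result if and only if the corresponding
multisets of vertices differ by a multiple of the full vertex set. -/
theorem applyTwists_eq_iff {V : Type*} [Fintype V] [DecidableEq V] [Nonempty V]
    (m : V → V → ℕ) (hsymm : ∀ u v, m u v = m v u) (hloop : ∀ v, m v v = 0)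
    (hconn : MGConnected m) (w : V → ℤ) (S S' : Multiset V) :
    applyTwists m w S = applyTwists m w S' ↔
      ∃ k : ℕ, S = S' + k • (Finset.univ.val : Multiset V)
        ∨ S' = S + k • (Finset.univ.val : Multiset V) := by
  classical
  constructor
  · intro heq
    set d : V → ℤ := fun v => (S.count v : ℤ) - (S'.count v : ℤ) with hd
    have hlap : ∀ u, ∑ v, (m u v : ℤ) * (d v - d u) = 0 := by
      intro u
      rw [← lap_rewrite m hsymm hloop d u]
      have h1 : applyTwists m w S u = applyTwists m w S' u := by rw [heq]
      rw [sum_delta_count, sum_delta_count] at h1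
      have h2 : ∑ v, (S.count v : ℤ) * twistDelta m v u
          = ∑ v, (S'.count v : ℤ) * twistDelta m v u := by linarith
      calc ∑ v, d v * twistDelta m v u
          = ∑ v, ((S.count v : ℤ) * twistDelta m v u
              - (S'.count v : ℤ) * twistDelta m v u) := by
            exact Finset.sum_congr rfl fun v _ => by rw [hd]; ring
        _ = 0 := by rw [Finset.sum_sub_distrib, h2, sub_self]
    have hconst := const_of_lap m hconn d hlap
    obtain ⟨u0⟩ := ‹Nonempty V›
    rcases le_or_gt 0 (d u0) with hc | hc
    · refine ⟨(d u0).toNat, Or.inl ?_⟩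
      ext v
      rw [Multiset.count_add, Multiset.count_nsmul, Multiset.count_univ, mul_one]
      have h1 := hconst v u0
      simp only [hd] at h1 hc ⊢
      omega
    · refine ⟨(-(d u0)).toNat, Or.inr ?_⟩
      ext v
      rw [Multiset.count_add, Multiset.count_nsmul, Multiset.count_univ, mul_one]
      have h1 := hconst v u0
      simp only [hd] at h1 hc ⊢
      omega
  · intro ⟨k, hk⟩
    have hzero : ∀ u : V, ∑ v, twistDelta m v u = 0 := by
      intro u
      have h1 : ∀ v, twistDelta m v u
          = (m v u : ℤ) - (if v = u then (valence m u : ℤ) else 0) := by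
        intro v
        by_cases h : v = u
        · subst h; simp [twistDelta, hloop]
        · simp [twistDelta, Ne.symm h, h]
      simp only [h1]
      rw [Finset.sum_sub_distrib, Finset.sum_ite_eq' Finset.univ u, if_pos (Finset.mem_univ u)]
      rw [valence]
      push_cast
      rw [sub_eq_zero]
      exact Finset.sum_congr rfl fun v _ => by rw [hsymm u v]
    have key : ∀ (T : Multiset V) (n : ℕ),
        applyTwists m w (T + n • (Finset.univ.val : Multiset V)) = applyTwists m w T := by
      intro T n
      funext u
      rw [sum_delta_count, sum_delta_count]
      congr 1
      have : ∀ v : V, ((T + n • (Finset.univ.val : Multiset V)).count v : ℤ)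
          = (T.count v : ℤ) + n := by
        intro v
        rw [Multiset.count_add, Multiset.count_nsmul, Multiset.count_univ, mul_one]
        push_cast; ring
      simp only [this, add_mul, Finset.sum_add_distrib, ← Finset.mul_sum, hzero,
        mul_zero, add_zero]
    rcases hk with h | h
    · rw [h, key]
    · rw [h, key]
end

section
/- Let Γ be a finite connected loopless multigraph with a chain structure n : E(Γ) → ℤ_{>0}. For any admissible multidegree w on (Γ, n) and any vertex v, there exists an admissible multidegree w' concentrated at v which is obtained from w by a sequence of twists at vertices other than v. -/
set_option linter.unusedSectionVars false
set_option maxHeartbeats 1000000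

/-- An admissible multidegree on a directed multigraph with edge set `E` and chain
structure `n : E → ℕ` (each `n e > 0`): an integer weight on each vertex together with an
element `μ(e) ∈ ℤ/n(e)ℤ` for each edge. -/
structure AdmMultideg (V E : Type*) (n : E → ℕ) where
  wG : V → ℤ
  mu : (e : E) → ZMod (n e)

namespace AdmMultideg

variable {V E : Type*} [Fintype V] [Fintype E] [DecidableEq V] [DecidableEq E]

/-- `σ(e,v)` is `1` if `v` is the tail of `e`, `-1` if `v` is the head, `0` otherwise. -/
def sigma (tail head : E → V) (e : E) (v : V) : ℤ :=
  if tail e = v then 1 else if head e = v then -1 else 0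

/-- The twist of an admissible multidegree at a vertex `v`: for each adjacent edge `e`,
increase `μ(e)` by `σ(e,v)`; decrease `w_Γ(v)` by the number of adjacent edges with old
`μ(e) = 0`; and for each adjacent edge whose new `μ(e)` is zero, increase `w_Γ` by one at
the other endpoint. -/
def twist (tail head : E → V) (n : E → ℕ) (w : AdmMultideg V E n) (v : V) :
    AdmMultideg V E n where
  wG u := w.wG u
    - (if u = v then
        ((Finset.univ.filter (fun e => (tail e = v ∨ head e = v) ∧ w.mu e = 0)).card : ℤ)
      else 0)
    + ((Finset.univ.filter (fun e => (tail e = v ∨ head e = v) ∧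
        (if tail e = v then head e else tail e) = u ∧
        w.mu e + ((sigma tail head e v : ℤ) : ZMod (n e)) = 0)).card : ℤ)
  mu e := w.mu e + ((sigma tail head e v : ℤ) : ZMod (n e))

/-- The negative twist of an admissible multidegree at a vertex `v`: the inverse
operation to `twist`. -/
def negTwist (tail head : E → V) (n : E → ℕ) (w : AdmMultideg V E n) (v : V) :
    AdmMultideg V E n where
  wG u := w.wG u
    + (if u = v then
        ((Finset.univ.filter (fun e => (tail e = v ∨ head e = v) ∧
          w.mu e - ((sigma tail head e v : ℤ) : ZMod (n e)) = 0)).card : ℤ)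
      else 0)
    - ((Finset.univ.filter (fun e => (tail e = v ∨ head e = v) ∧
        (if tail e = v then head e else tail e) = u ∧ w.mu e = 0)).card : ℤ)
  mu e := w.mu e - ((sigma tail head e v : ℤ) : ZMod (n e))

/-- An admissible multidegree `w` is concentrated at `v` if there is an ordering of the
vertices starting with `v` such that each subsequent vertex becomes strictly negative
after applying the negative twists at all previous vertices in the ordering. -/
def Concentrated (tail head : E → V) (n : E → ℕ) (w : AdmMultideg V E n) (v : V) : Prop :=
  ∃ l : List V, l.Nodup ∧ (∀ u, u ∈ l) ∧ l.head? = some v ∧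
    ∀ (i : ℕ) (h : i < l.length), 0 < i →
      ((l.take i).foldl (negTwist tail head n) w).wG (l.get ⟨i, h⟩) < 0

end AdmMultideg

open AdmMultideg

/- ### Auxiliary counting lemmas -/

lemma AMDaux.count_res (m L : ℕ) (hm : 0 < m) (hdvd : m ∣ L) (t : ZMod m) :
    ((Finset.range L).filter (fun j : ℕ => (j : ZMod m) = t)).card = L / m := by
  have : NeZero m := ⟨hm.ne'⟩
  have hcond : ∀ j : ℕ, ((j : ZMod m) = t) ↔ j % m = t.val := by
    intro j
    constructor
    · intro h; rw [← h, ZMod.val_natCast]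
    · intro h; apply ZMod.val_injective m; rw [ZMod.val_natCast, h]
  have hr : t.val < m := ZMod.val_lt t
  have key := Finset.card_bij'
    (s := (Finset.range L).filter (fun j : ℕ => (j : ZMod m) = t))
    (t := Finset.range (L / m))
    (i := fun j _ => j / m) (j := fun q _ => q * m + t.val) ?_ ?_ ?_ ?_
  · rw [key, Finset.card_range]
  · intro j hj
    simp only [Finset.mem_filter, Finset.mem_range, hcond] at hj
    simp only [Finset.mem_range]
    exact Nat.div_lt_div_of_lt_of_dvd hdvd hj.1
  · intro q hq
    simp only [Finset.mem_range] at hq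
    simp only [Finset.mem_filter, Finset.mem_range, hcond]
    refine ⟨?_, ?_⟩
    · have h1 : (q + 1) * m ≤ L := by
        rw [← Nat.div_mul_cancel hdvd]; exact Nat.mul_le_mul_right m hq
      calc q * m + t.val < (q + 1) * m := by rw [add_mul, one_mul]; omega
        _ ≤ L := h1
    · rw [mul_comm, Nat.mul_add_mod, Nat.mod_eq_of_lt hr]
  · intro j hj
    simp only [Finset.mem_filter, Finset.mem_range, hcond] at hj
    simpa only [hj.2] using Nat.div_add_mod' j m
  · intro q _
    rw [mul_comm, Nat.mul_add_div hm, Nat.div_eq_of_lt hr, add_zero]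

lemma AMDaux.count_affine (m L : ℕ) (hm : 0 < m) (hdvd : m ∣ L) (a c : ZMod m)
    (hc : c * c = 1) :
    ((Finset.range L).filter (fun j : ℕ => a + (j : ZMod m) * c = 0)).card = L / m := by
  have key : ∀ j : ℕ, (a + (j : ZMod m) * c = 0) ↔ ((j : ZMod m) = -a * c) := by
    intro j
    constructor
    · intro h; linear_combination c * h - (j : ZMod m) * hc
    · intro h; linear_combination c * h - a * hc
  rw [Finset.filter_congr (fun j _ => (key j))]
  exact AMDaux.count_res m L hm hdvd _

lemma AMDaux.geo (A : ℕ) : ∀ k, A * ∑ i ∈ Finset.range k, (A+1)^i + 1 = (A+1)^k := by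
  intro k
  induction k with
  | zero => simp
  | succ k ih => rw [Finset.sum_range_succ, pow_succ]; nlinarith [ih]

lemma AMDaux.reindex (A t D : ℕ) (h : t ≤ D) :
    ∑ j ∈ Finset.Ioc t D, (A+1)^(D - j) = ∑ i ∈ Finset.range (D - t), (A+1)^i := by
  refine Finset.sum_nbij' (fun j => D - j) (fun i => D - i) ?_ ?_ ?_ ?_ ?_
  · intro j hj; simp only [Finset.mem_Ioc] at hj; simp only [Finset.mem_range]; omega
  · intro i hi; simp only [Finset.mem_range] at hi; simp only [Finset.mem_Ioc]; omega
  · intro j hj; simp only [Finset.mem_Ioc] at hj; omega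
  · intro i hi; simp only [Finset.mem_range] at hi; omega
  · intro j hj; rfl

/-- Reachability from `v` in exactly `k` steps. -/
def AMDaux.reachN {V : Type*} (adj : V → V → Prop) (v : V) : ℕ → V → Prop
  | 0 => fun u => u = v
  | (k+1) => fun u => ∃ x, AMDaux.reachN adj v k x ∧ adj x u

lemma AMDaux.reach_exists {V : Type*} (adj : V → V → Prop) (v u : V)
    (h : Relation.ReflTransGen adj v u) : ∃ k, AMDaux.reachN adj v k u := by
  induction h with
  | refl => exact ⟨0, rfl⟩
  | tail _ hadj ih => obtain ⟨k, hk⟩ := ih; exact ⟨k + 1, _, hk, hadj⟩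

lemma AMDaux.nodup_get_not_mem_take {α : Type*} (l : List α) (hl : l.Nodup) (i : ℕ)
    (h : i < l.length) : l.get ⟨i, h⟩ ∉ l.take i := by
  intro hmem
  rw [List.mem_iff_getElem] at hmem
  obtain ⟨j, hj, hje⟩ := hmem
  simp only [List.length_take] at hj
  have hji : j < i := lt_of_lt_of_le hj (min_le_left _ _)
  have hjl : j < l.length := hji.trans_le h.le
  rw [List.getElem_take] at hje
  have := (List.nodup_iff_injective_getElem.1 hl)
    (a₁ := ⟨j, hjl⟩) (a₂ := ⟨i, h⟩) (by simpa using hje)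
  simp at this
  omega

/- ### The abstract chip-firing lemma -/

lemma AMDaux.partB {V : Type*} [Fintype V] [DecidableEq V] (v : V)
    (f : V → ℕ) (hfv : f v = 0)
    (cc : V → V → ℕ) (dd : V → ℕ) (hsum : ∀ u, ∑ x, cc x u = dd u)
    (hstep : ∀ u, u ≠ v → ∃ x, f x < f u ∧ 1 ≤ cc x u)
    (wG : V → ℤ) :
    ∃ m : V → ℕ, m v = 0 ∧
      ∀ u, u ≠ v → wG u + (∑ x, (m x : ℤ) * cc x u) - (m u : ℤ) * dd u < 0 := by
  set A := Finset.univ.sup dd with hA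
  set W := Finset.univ.sup (fun u => (wG u).toNat) with hWdef
  set D := Finset.univ.sup f with hD
  have hdegA : ∀ u, dd u ≤ A := fun u => Finset.le_sup (Finset.mem_univ u)
  have hW : ∀ u, wG u ≤ (W : ℤ) := fun u =>
    le_trans (Int.self_le_toNat _)
      (Int.ofNat_le.2 (Finset.le_sup (f := fun u => (wG u).toNat) (Finset.mem_univ u)))
  have hfD : ∀ u, f u ≤ D := fun u => Finset.le_sup (Finset.mem_univ u)
  set b : ℕ → ℕ := fun j => (W + 1) * (A + 1) ^ (D - j) with hb
  refine ⟨fun u => ∑ j ∈ Finset.Ioc 0 (f u), b j, ?_, ?_⟩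
  · show (∑ j ∈ Finset.Ioc 0 (f v), b j) = 0
    rw [hfv]; simp
  intro u hu
  set m : V → ℕ := fun u => ∑ j ∈ Finset.Ioc 0 (f u), b j with hm
  set R : ℕ := ∑ j ∈ Finset.Ioc (f u) D, b j with hR
  have hbRkey : A * R + (W + 1) = b (f u) := by
    rw [hR]
    simp only [hb, ← Finset.mul_sum]
    rw [AMDaux.reindex A (f u) D (hfD u)]
    have hg := AMDaux.geo A (D - f u)
    calc A * ((W + 1) * ∑ i ∈ Finset.range (D - f u), (A + 1) ^ i) + (W + 1)
        = (W + 1) * (A * ∑ i ∈ Finset.range (D - f u), (A + 1) ^ i + 1) := by ring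
      _ = (W + 1) * (A + 1) ^ (D - f u) := by rw [hg]
  have hmono : ∀ x y : V, f x ≤ f y → m x + ∑ j ∈ Finset.Ioc (f x) (f y), b j = m y := by
    intro x y hxy
    simp only [hm]
    exact Finset.sum_Ioc_consecutive b (Nat.zero_le _) hxy
  have hlow : ∀ x, f x < f u → (m x : ℤ) ≤ (m u : ℤ) - b (f u) := by
    intro x hx
    have h1 := hmono x u hx.le
    have h2 : b (f u) ≤ ∑ j ∈ Finset.Ioc (f x) (f u), b j :=
      Finset.single_le_sum (f := b) (fun j _ => Nat.zero_le _)
        (Finset.mem_Ioc.2 ⟨hx, le_refl _⟩)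
    have h3 : m x + b (f u) ≤ m u := by omega
    have h4 := (Nat.cast_le (α := ℤ)).2 h3
    push_cast at h4
    linarith
  have hhigh : ∀ x : V, (m x : ℤ) ≤ (m u : ℤ) + R := by
    intro x
    rcases le_or_gt (f x) (f u) with h | h
    · have h1 := hmono x u h
      have h3 : m x ≤ m u + R := by omega
      exact_mod_cast h3
    · have h1 := hmono u x h.le
      have h2 : ∑ j ∈ Finset.Ioc (f u) (f x), b j ≤ R := by
        rw [hR]
        exact Finset.sum_le_sum_of_subset (Finset.Ioc_subset_Ioc le_rfl (hfD x))
      have h3 : m x ≤ m u + R := by omega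
      exact_mod_cast h3
  obtain ⟨x₀, hx₀f, hx₀c⟩ := hstep u hu
  have key : (∑ x, (m x : ℤ) * cc x u) - (m u : ℤ) * dd u
      = ∑ x, ((m x : ℤ) - m u) * cc x u := by
    rw [← hsum u]
    push_cast
    rw [Finset.mul_sum, ← Finset.sum_sub_distrib]
    exact Finset.sum_congr rfl fun x _ => by ring
  have hsplit : (∑ x, ((m x : ℤ) - m u) * cc x u)
      = ((m x₀ : ℤ) - m u) * cc x₀ u
        + ∑ x ∈ Finset.univ.erase x₀, ((m x : ℤ) - m u) * cc x u :=
    (Finset.add_sum_erase _ _ (Finset.mem_univ x₀)).symm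
  have hneg : (m x₀ : ℤ) - m u ≤ -(b (f u)) := by linarith [hlow x₀ hx₀f]
  have hb1 : ((m x₀ : ℤ) - m u) * cc x₀ u ≤ -(b (f u)) := by
    have h1 : ((m x₀ : ℤ) - m u) * cc x₀ u ≤ ((m x₀ : ℤ) - m u) * 1 :=
      mul_le_mul_of_nonpos_left (by exact_mod_cast hx₀c)
        (le_trans hneg (by simp))
    linarith
  have hb2 : (∑ x ∈ Finset.univ.erase x₀, ((m x : ℤ) - m u) * cc x u)
      ≤ (A : ℤ) * R := by
    calc (∑ x ∈ Finset.univ.erase x₀, ((m x : ℤ) - m u) * cc x u)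
        ≤ ∑ x ∈ Finset.univ.erase x₀, (R : ℤ) * cc x u := by
          refine Finset.sum_le_sum fun x _ => ?_
          exact mul_le_mul_of_nonneg_right (by linarith [hhigh x]) (by positivity)
      _ ≤ ∑ x, (R : ℤ) * cc x u := by
          refine Finset.sum_le_sum_of_subset_of_nonneg
            (Finset.erase_subset _ _) fun x _ _ => by positivity
      _ = (R : ℤ) * dd u := by
          rw [← Finset.mul_sum]
          congr 1
          rw [← hsum u]
          push_cast
          rfl
      _ ≤ (A : ℤ) * R := by
          have h5 : (dd u : ℤ) ≤ A := by exact_mod_cast hdegA u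
          nlinarith [Int.natCast_nonneg R]
  have hkeyZ : (A : ℤ) * R + (W + 1) = b (f u) := by exact_mod_cast hbRkey
  have hWu := hW u
  linarith [key, hsplit]

/- ### Iterated twists at a single vertex -/

namespace AdmMultideg

variable {V E : Type*} [Fintype V] [Fintype E] [DecidableEq V] [DecidableEq E]
variable (tail head : E → V) (n : E → ℕ)

lemma sum_count (L : ℕ) (hn : ∀ e, 0 < n e) (hL : ∀ e, n e ∣ L)
    (Q : E → Prop) [DecidablePred Q] (c : (e : E) → ZMod (n e))
    (hc : ∀ e, Q e → c e * c e = 1) (a : (e : E) → ZMod (n e)) :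
    ∑ j ∈ Finset.range L,
        (Finset.univ.filter (fun e => Q e ∧ a e + (j : ZMod (n e)) * c e = 0)).card
      = ∑ e ∈ Finset.univ.filter Q, L / n e := by
  have h1 : ∀ j : ℕ, (Finset.univ.filter (fun e => Q e ∧ a e + (j : ZMod (n e)) * c e = 0))
      = (Finset.univ.filter Q).filter (fun e => a e + (j : ZMod (n e)) * c e = 0) := by
    intro j; rw [Finset.filter_filter]
  calc ∑ j ∈ Finset.range L,
        (Finset.univ.filter (fun e => Q e ∧ a e + (j : ZMod (n e)) * c e = 0)).card
      = ∑ j ∈ Finset.range L, ∑ e ∈ Finset.univ.filter Q,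
          if a e + (j : ZMod (n e)) * c e = 0 then 1 else 0 := by
        refine Finset.sum_congr rfl fun j _ => ?_
        rw [h1 j, Finset.card_filter]
    _ = ∑ e ∈ Finset.univ.filter Q, ∑ j ∈ Finset.range L,
          if a e + (j : ZMod (n e)) * c e = 0 then 1 else 0 := Finset.sum_comm
    _ = ∑ e ∈ Finset.univ.filter Q, L / n e := by
        refine Finset.sum_congr rfl fun e he => ?_
        rw [← Finset.card_filter]
        exact AMDaux.count_affine (n e) L (hn e) (hL e) (a e) (c e)
          (hc e (Finset.mem_filter.1 he).2)

lemma iterate_mu (x : V) (k : ℕ) (w : AdmMultideg V E n) (e : E) :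
    ((fun w' => twist tail head n w' x)^[k] w).mu e
      = w.mu e + (k : ZMod (n e)) * ((sigma tail head e x : ℤ) : ZMod (n e)) := by
  induction k with
  | zero => simp
  | succ k ih =>
    rw [Function.iterate_succ_apply']
    show ((fun w' => twist tail head n w' x)^[k] w).mu e + _ = _
    rw [ih]; push_cast; ring

lemma iterate_wG (x : V) (k : ℕ) (w : AdmMultideg V E n) (u : V) :
    ((fun w' => twist tail head n w' x)^[k] w).wG u = w.wG u
      - (if u = x then (∑ j ∈ Finset.range k,
          ((Finset.univ.filter (fun e => (tail e = x ∨ head e = x) ∧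
            w.mu e + (j : ZMod (n e)) * ((sigma tail head e x : ℤ) : ZMod (n e)) = 0)).card : ℤ))
        else 0)
      + ∑ j ∈ Finset.range k,
          ((Finset.univ.filter (fun e => (tail e = x ∨ head e = x) ∧
            (if tail e = x then head e else tail e) = u ∧
            w.mu e + ((j + 1 : ℕ) : ZMod (n e)) * ((sigma tail head e x : ℤ) : ZMod (n e)) = 0)).card : ℤ) := by
  induction k with
  | zero => simp
  | succ k ih =>
    rw [Function.iterate_succ_apply']
    show ((fun w' => twist tail head n w' x)^[k] w).wG u - _ + _ = _
    rw [ih]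
    have hA : (Finset.univ.filter (fun e => (tail e = x ∨ head e = x) ∧
        ((fun w' => twist tail head n w' x)^[k] w).mu e = 0))
        = Finset.univ.filter (fun e => (tail e = x ∨ head e = x) ∧
            w.mu e + (k : ZMod (n e)) * ((sigma tail head e x : ℤ) : ZMod (n e)) = 0) := by
      apply Finset.filter_congr
      intro e _
      rw [iterate_mu]
    have hB : (Finset.univ.filter (fun e => (tail e = x ∨ head e = x) ∧
        (if tail e = x then head e else tail e) = u ∧
        ((fun w' => twist tail head n w' x)^[k] w).mu e
          + ((sigma tail head e x : ℤ) : ZMod (n e)) = 0))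
        = Finset.univ.filter (fun e => (tail e = x ∨ head e = x) ∧
            (if tail e = x then head e else tail e) = u ∧
            w.mu e + ((k + 1 : ℕ) : ZMod (n e)) * ((sigma tail head e x : ℤ) : ZMod (n e)) = 0) := by
      apply Finset.filter_congr
      intro e _
      rw [iterate_mu]
      constructor <;> intro ⟨h1, h2, h3⟩ <;> refine ⟨h1, h2, ?_⟩
      · rw [← h3]; push_cast; ring
      · rw [← h3]; push_cast; ring
    rw [hA, hB, Finset.sum_range_succ, Finset.sum_range_succ]
    by_cases hu : u = x <;> simp [hu] <;> ring

lemma sigma_sq (hloop : ∀ e, tail e ≠ head e) (e : E) (x : V)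
    (hadj : tail e = x ∨ head e = x) :
    ((sigma tail head e x : ℤ) : ZMod (n e)) * ((sigma tail head e x : ℤ) : ZMod (n e)) = 1 := by
  unfold sigma
  by_cases h1 : tail e = x
  · simp [h1]
  · have h2 : head e = x := hadj.resolve_left h1
    simp only [h1, h2, if_true, if_false]
    push_cast
    ring

/-- Weighted degree. -/
def degN (N : ℕ) (x : V) : ℕ :=
  ∑ e ∈ Finset.univ.filter (fun e => tail e = x ∨ head e = x), N / n e

/-- Weighted edge count between two vertices. -/
def cN (N : ℕ) (x u : V) : ℕ :=
  ∑ e ∈ Finset.univ.filter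
      (fun e => (tail e = x ∧ head e = u) ∨ (tail e = u ∧ head e = x)), N / n e

lemma filter_between (hloop : ∀ e, tail e ≠ head e) (x u : V) :
    Finset.univ.filter (fun e => (tail e = x ∨ head e = x) ∧
        (if tail e = x then head e else tail e) = u)
      = Finset.univ.filter
        (fun e => (tail e = x ∧ head e = u) ∨ (tail e = u ∧ head e = x)) := by
  apply Finset.filter_congr
  intro e _
  by_cases h1 : tail e = x
  · rw [if_pos h1]
    constructor
    · rintro ⟨-, h⟩; exact Or.inl ⟨h1, h⟩
    · rintro (⟨-, h⟩ | ⟨h2, h3⟩)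
      · exact ⟨Or.inl h1, h⟩
      · exact absurd (h1.trans h3.symm) (hloop e)
  · rw [if_neg h1]
    constructor
    · rintro ⟨h2, h3⟩
      exact Or.inr ⟨h3, h2.resolve_left h1⟩
    · rintro (⟨h2, -⟩ | ⟨h2, h3⟩)
      · exact absurd h2 h1
      · exact ⟨Or.inr h3, h2⟩

lemma fire (N : ℕ) (hn : ∀ e, 0 < n e) (hloop : ∀ e, tail e ≠ head e)
    (hN : ∀ e, n e ∣ N) (x : V) (K : ℕ) (w : AdmMultideg V E n) :
    (∀ e, ((fun w' => twist tail head n w' x)^[K * N] w).mu e = w.mu e) ∧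
    ∀ u, ((fun w' => twist tail head n w' x)^[K * N] w).wG u
      = w.wG u - (if u = x then (K * degN tail head n N x : ℤ) else 0)
        + (K * cN tail head n N x u : ℤ) := by
  have hNdvd : ∀ e, n e ∣ K * N := fun e => Dvd.dvd.mul_left (hN e) K
  have hdiv : ∀ e, K * N / n e = K * (N / n e) := fun e => Nat.mul_div_assoc K (hN e)
  have hadjc : ∀ e, (tail e = x ∨ head e = x) →
      ((sigma tail head e x : ℤ) : ZMod (n e)) * ((sigma tail head e x : ℤ) : ZMod (n e)) = 1 :=
    fun e he => sigma_sq tail head n hloop e x he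
  constructor
  · intro e
    rw [iterate_mu]
    have h0 : ((K * N : ℕ) : ZMod (n e)) = 0 :=
      (ZMod.natCast_eq_zero_iff _ _).2 (hNdvd e)
    rw [h0, zero_mul, add_zero]
  · intro u
    rw [iterate_wG]
    have hA : (∑ j ∈ Finset.range (K * N),
        ((Finset.univ.filter (fun e => (tail e = x ∨ head e = x) ∧
          w.mu e + (j : ZMod (n e)) * ((sigma tail head e x : ℤ) : ZMod (n e)) = 0)).card : ℤ))
        = (K * degN tail head n N x : ℤ) := by
      rw [← Nat.cast_sum]
      rw [sum_count n (K * N) hn hNdvd _ _ hadjc w.mu]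
      simp only [degN, hdiv, ← Finset.mul_sum]
      push_cast
      ring
    have hB : (∑ j ∈ Finset.range (K * N),
        ((Finset.univ.filter (fun e => (tail e = x ∨ head e = x) ∧
          (if tail e = x then head e else tail e) = u ∧
          w.mu e + ((j + 1 : ℕ) : ZMod (n e)) * ((sigma tail head e x : ℤ) : ZMod (n e)) = 0)).card : ℤ))
        = (K * cN tail head n N x u : ℤ) := by
      have hcong : ∀ j : ℕ, (Finset.univ.filter (fun e => (tail e = x ∨ head e = x) ∧
          (if tail e = x then head e else tail e) = u ∧
          w.mu e + ((j + 1 : ℕ) : ZMod (n e)) * ((sigma tail head e x : ℤ) : ZMod (n e)) = 0))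
          = (Finset.univ.filter (fun e => ((tail e = x ∨ head e = x) ∧
            (if tail e = x then head e else tail e) = u) ∧
            (w.mu e + ((sigma tail head e x : ℤ) : ZMod (n e)))
              + (j : ZMod (n e)) * ((sigma tail head e x : ℤ) : ZMod (n e)) = 0)) := by
        intro j
        apply Finset.filter_congr
        intro e _
        constructor
        · rintro ⟨h1, h2, h3⟩
          refine ⟨⟨h1, h2⟩, ?_⟩
          rw [← h3]; push_cast; ring
        · rintro ⟨⟨h1, h2⟩, h3⟩
          refine ⟨h1, h2, ?_⟩
          rw [← h3]; push_cast; ring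
      calc (∑ j ∈ Finset.range (K * N),
          ((Finset.univ.filter (fun e => (tail e = x ∨ head e = x) ∧
            (if tail e = x then head e else tail e) = u ∧
            w.mu e + ((j + 1 : ℕ) : ZMod (n e)) * ((sigma tail head e x : ℤ) : ZMod (n e)) = 0)).card : ℤ))
          = ((∑ j ∈ Finset.range (K * N),
            (Finset.univ.filter (fun e => ((tail e = x ∨ head e = x) ∧
              (if tail e = x then head e else tail e) = u) ∧
              (w.mu e + ((sigma tail head e x : ℤ) : ZMod (n e)))
                + (j : ZMod (n e)) * ((sigma tail head e x : ℤ) : ZMod (n e)) = 0)).card : ℕ) : ℤ) := by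
            rw [← Nat.cast_sum]
            exact congrArg Nat.cast (Finset.sum_congr rfl fun j _ => by rw [hcong j])
        _ = (K * cN tail head n N x u : ℤ) := by
            rw [sum_count n (K * N) hn hNdvd _ _
              (fun e he => hadjc e he.1) (fun e => w.mu e + _)]
            rw [filter_between tail head hloop x u]
            simp only [cN, hdiv, ← Finset.mul_sum]
            push_cast
            ring
    rw [hA, hB]

/- ### Multi-vertex firing -/

lemma foldl_replicate (x : V) (k : ℕ) (w : AdmMultideg V E n) :
    (List.replicate k x).foldl (fun w' u => twist tail head n w' u) w
      = (fun w' => twist tail head n w' x)^[k] w := by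
  induction k generalizing w with
  | zero => rfl
  | succ k ih =>
    rw [List.replicate_succ, List.foldl_cons, Function.iterate_succ_apply]
    exact ih _

lemma multi_fire (N : ℕ) (hn : ∀ e, 0 < n e) (hloop : ∀ e, tail e ≠ head e)
    (hN : ∀ e, n e ∣ N) (m : V → ℕ) (xs : List V) (w : AdmMultideg V E n) (u : V) :
    ((xs.foldr (fun x acc => List.replicate (m x * N) x ++ acc) []).foldl
        (fun w' u => twist tail head n w' u) w).wG u
      = w.wG u + ((xs.map fun x => ((m x : ℤ) * cN tail head n N x u
          - if u = x then (m x : ℤ) * degN tail head n N x else 0)).sum) := by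
  induction xs generalizing w with
  | nil => simp
  | cons x xs ih =>
    rw [List.foldr_cons, List.foldl_append, foldl_replicate, List.map_cons, List.sum_cons]
    rw [ih]
    rw [(fire tail head n N hn hloop hN x (m x) w).2 u]
    by_cases hux : u = x <;> simp only [hux, if_pos, if_neg, if_true, if_false] <;> push_cast <;> ring

lemma mem_fold_list (N : ℕ) (m : V → ℕ) (xs : List V) (y : V)
    (h : y ∈ xs.foldr (fun x acc => List.replicate (m x * N) x ++ acc) []) : y ∈ xs := by
  induction xs with
  | nil => simpa using h
  | cons x xs ih =>
    rw [List.foldr_cons, List.mem_append] at h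
    rcases h with h | h
    · rw [List.eq_of_mem_replicate h]; exact List.mem_cons_self
    · exact List.mem_cons_of_mem x (ih h)

/- ### Negative twists only decrease other vertices -/

lemma negTwist_wG_le (w : AdmMultideg V E n) (x u : V) (h : u ≠ x) :
    (negTwist tail head n w x).wG u ≤ w.wG u := by
  show w.wG u + (if u = x then _ else 0) - _ ≤ w.wG u
  rw [if_neg h, add_zero]
  have : (0 : ℤ) ≤ ((Finset.univ.filter (fun e => (tail e = x ∨ head e = x) ∧
      (if tail e = x then head e else tail e) = u ∧ w.mu e = 0)).card : ℤ) := Nat.cast_nonneg _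
  linarith

lemma foldl_negTwist_le (s : List V) (w : AdmMultideg V E n) (u : V) (h : u ∉ s) :
    (s.foldl (negTwist tail head n) w).wG u ≤ w.wG u := by
  induction s generalizing w with
  | nil => exact le_refl _
  | cons a s ih =>
    rw [List.foldl_cons]
    have h1 : u ≠ a := fun hu => h (hu ▸ List.mem_cons_self (a := a) (l := s))
    have h2 : u ∉ s := fun hu => h (List.mem_cons_of_mem a hu)
    exact le_trans (ih _ h2) (negTwist_wG_le tail head n w a u h1)

/- ### The degree identity -/

lemma sum_cN (hloop : ∀ e, tail e ≠ head e) (N : ℕ) (u : V) :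
    ∑ x, cN tail head n N x u = degN tail head n N u := by
  unfold cN degN
  simp_rw [Finset.sum_filter]
  rw [Finset.sum_comm]
  refine Finset.sum_congr rfl fun e _ => ?_
  by_cases h1 : head e = u
  · have h2 : tail e ≠ u := fun h => hloop e (h.trans h1.symm)
    have hiff : ∀ x : V, ((tail e = x ∧ head e = u) ∨ (tail e = u ∧ head e = x)) ↔ x = tail e := by
      intro x
      constructor
      · rintro (⟨h, -⟩ | ⟨h, -⟩)
        · exact h.symm
        · exact absurd h h2
      · rintro rfl
        exact Or.inl ⟨rfl, h1⟩
    calc (∑ x, if (tail e = x ∧ head e = u) ∨ (tail e = u ∧ head e = x) then N / n e else 0)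
        = ∑ x, if x = tail e then N / n e else 0 :=
          Finset.sum_congr rfl fun x _ => if_congr (hiff x) rfl rfl
      _ = N / n e := by rw [Finset.sum_ite_eq' Finset.univ (tail e) (fun _ => N / n e)]; simp
      _ = if tail e = u ∨ head e = u then N / n e else 0 := by rw [if_pos (Or.inr h1)]
  · by_cases h2 : tail e = u
    · have hiff : ∀ x : V, ((tail e = x ∧ head e = u) ∨ (tail e = u ∧ head e = x)) ↔ x = head e := by
        intro x
        constructor
        · rintro (⟨-, h⟩ | ⟨-, h⟩)
          · exact absurd h h1
          · exact h.symm
        · rintro rfl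
          exact Or.inr ⟨h2, rfl⟩
      calc (∑ x, if (tail e = x ∧ head e = u) ∨ (tail e = u ∧ head e = x) then N / n e else 0)
          = ∑ x, if x = head e then N / n e else 0 :=
            Finset.sum_congr rfl fun x _ => if_congr (hiff x) rfl rfl
        _ = N / n e := by rw [Finset.sum_ite_eq' Finset.univ (head e) (fun _ => N / n e)]; simp
        _ = if tail e = u ∨ head e = u then N / n e else 0 := by rw [if_pos (Or.inl h2)]
    · rw [if_neg (by tauto)]
      refine Finset.sum_eq_zero fun x _ => ?_
      rw [if_neg (by tauto)]

end AdmMultideg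

open AdmMultideg

/-- For any admissible multidegree `w` on a finite connected loopless directed multigraph
with chain structure, and any vertex `v`, there is an admissible multidegree concentrated
at `v` obtained from `w` by a sequence of twists at vertices other than `v`. -/
theorem exists_concentrated_twist {V E : Type*} [Fintype V] [Fintype E] [DecidableEq V]
    [DecidableEq E] [Nonempty V] (tail head : E → V) (n : E → ℕ)
    (hn : ∀ e, 0 < n e) (hloop : ∀ e, tail e ≠ head e)
    (hconn : ∀ u u' : V, Relation.ReflTransGen
      (fun a b => ∃ e, (tail e = a ∧ head e = b) ∨ (tail e = b ∧ head e = a)) u u')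
    (w : AdmMultideg V E n) (v : V) :
    ∃ l : List V, v ∉ l ∧
      Concentrated tail head n (l.foldl (fun w' u => twist tail head n w' u) w) v := by
  classical
  set N := ∏ e', n e' with hNdef
  have hN : ∀ e, n e ∣ N := fun e => Finset.dvd_prod_of_mem _ (Finset.mem_univ e)
  have hNpos : 0 < N := Finset.prod_pos fun e _ => hn e
  -- distance function from v
  have hreach : ∀ u, ∃ k, AMDaux.reachN
      (fun a b => ∃ e, (tail e = a ∧ head e = b) ∨ (tail e = b ∧ head e = a)) v k u :=
    fun u => AMDaux.reach_exists _ v u (hconn v u)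
  set f : V → ℕ := fun u => Nat.find (hreach u) with hf
  have hfv : f v = 0 := (Nat.find_eq_zero _).2 rfl
  have hstep : ∀ u, u ≠ v → ∃ x, f x < f u ∧ 1 ≤ cN tail head n N x u := by
    intro u hu
    have hp : 0 < f u := by
      rcases Nat.eq_zero_or_pos (f u) with h0 | h
      · exfalso
        have hspec := Nat.find_spec (hreach u)
        rw [show Nat.find (hreach u) = f u from rfl, h0] at hspec
        exact hu hspec
      · exact h
    have hspec := Nat.find_spec (hreach u)
    obtain ⟨k, hk⟩ : ∃ k, f u = k + 1 := ⟨f u - 1, by omega⟩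
    rw [show Nat.find (hreach u) = f u from rfl, hk] at hspec
    obtain ⟨x, hx, hxu⟩ := hspec
    refine ⟨x, ?_, ?_⟩
    · have : f x ≤ k := Nat.find_le hx
      omega
    · obtain ⟨e, he⟩ := hxu
      have hmem : e ∈ Finset.univ.filter
          (fun e => (tail e = x ∧ head e = u) ∨ (tail e = u ∧ head e = x)) := by
        simp only [Finset.mem_filter, Finset.mem_univ, true_and]
        tauto
      have hpos : 0 < N / n e := Nat.div_pos (Nat.le_of_dvd hNpos (hN e)) (hn e)
      calc 1 ≤ N / n e := hpos
        _ ≤ cN tail head n N x u := by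
          unfold cN
          exact Finset.single_le_sum (f := fun e => N / n e)
            (fun _ _ => Nat.zero_le _) hmem
  obtain ⟨m, hmv, hmain⟩ := AMDaux.partB v f hfv
    (fun x u => cN tail head n N x u) (degN tail head n N)
    (fun u => sum_cN tail head n hloop N u) hstep w.wG
  -- the firing list
  set xs := (Finset.univ.erase v).toList with hxs
  set l := xs.foldr (fun x acc => List.replicate (m x * N) x ++ acc) [] with hl
  refine ⟨l, ?_, ?_⟩
  · intro hvl
    have h1 := mem_fold_list (V := V) N m xs v hvl
    rw [hxs, Finset.mem_toList] at h1
    exact (Finset.mem_erase.1 h1).1 rfl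
  -- the resulting multidegree is negative away from v
  have hw' : ∀ u, u ≠ v →
      (l.foldl (fun w' u => twist tail head n w' u) w).wG u < 0 := by
    intro u hu
    rw [hl, multi_fire tail head n N hn hloop hN m xs w u]
    have hsum2 : ((xs.map fun x => ((m x : ℤ) * cN tail head n N x u
        - if u = x then (m x : ℤ) * degN tail head n N x else 0)).sum)
        = ∑ x ∈ Finset.univ.erase v, ((m x : ℤ) * cN tail head n N x u
            - if u = x then (m x : ℤ) * degN tail head n N x else 0) := by
      rw [hxs]
      exact Finset.sum_map_toList _ _
    rw [hsum2]
    have hsum3 : (∑ x ∈ Finset.univ.erase v, ((m x : ℤ) * cN tail head n N x u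
        - if u = x then (m x : ℤ) * degN tail head n N x else 0))
        = ∑ x, ((m x : ℤ) * cN tail head n N x u
            - if u = x then (m x : ℤ) * degN tail head n N x else 0) := by
      refine Finset.sum_erase _ ?_
      rw [hmv, if_neg hu]
      push_cast
      ring
    rw [hsum3, Finset.sum_sub_distrib]
    have hsum4 : (∑ x, if u = x then (m x : ℤ) * degN tail head n N x else 0)
        = (m u : ℤ) * degN tail head n N u := by
      rw [Finset.sum_ite_eq Finset.univ u (fun x => (m x : ℤ) * degN tail head n N x)]
      simp
    rw [hsum4]
    have := hmain u hu
    linarith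
  -- conclude: Concentrated at v
  refine ⟨v :: (Finset.univ.erase v).toList, ?_, ?_, rfl, ?_⟩
  · refine List.nodup_cons.2 ⟨?_, Finset.nodup_toList _⟩
    intro hmem
    rw [Finset.mem_toList, Finset.mem_erase] at hmem
    exact hmem.1 rfl
  · intro u
    by_cases h : u = v
    · rw [h]; exact List.mem_cons_self
    · exact List.mem_cons_of_mem _ (by rw [Finset.mem_toList, Finset.mem_erase]; exact ⟨h, Finset.mem_univ u⟩)
  · intro i h hi
    set L := v :: (Finset.univ.erase v).toList with hLdef
    have hnd : L.Nodup := by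
      refine List.nodup_cons.2 ⟨?_, Finset.nodup_toList _⟩
      intro hmem
      rw [Finset.mem_toList, Finset.mem_erase] at hmem
      exact hmem.1 rfl
    have hget : L.get ⟨i, h⟩ ≠ v := by
      intro hEq
      have h0 : (0 : ℕ) < L.length := by simp [hLdef]
      have hv0 : L.get ⟨0, h0⟩ = v := rfl
      have := List.nodup_iff_injective_get.1 hnd (hEq.trans hv0.symm)
      have : i = 0 := congrArg Fin.val this
      omega
    have hnotmem : L.get ⟨i, h⟩ ∉ L.take i := AMDaux.nodup_get_not_mem_take L hnd i h
    have hle := foldl_negTwist_le tail head n (L.take i)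
      (l.foldl (fun w' u => twist tail head n w' u) w) (L.get ⟨i, h⟩) hnotmem
    exact lt_of_le_of_lt hle (hw' _ hget)
end

section
/- Let Γ be a finite connected loopless multigraph with trivial chain structure (n(e)=1 for all e). If a multidegree w : V(Γ) → ℤ satisfies w(v') ≤ 0 for all vertices v' ≠ v, then w is concentrated at v. -/
/-- The negative chip-firing twist at a vertex `u` (trivial chain structure): `w u`
increases by the valence of `u`, and `w x` decreases by the number of edges between
`x` and `u` for `x ≠ u`. -/
def negTwist {V : Type*} [Fintype V] [DecidableEq V] (m : V → V → ℕ) (w : V → ℤ) (u : V) :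
    V → ℤ :=
  fun x => (w x + if x = u then (valence m u : ℤ) else 0) - (m u x : ℤ)

/-- A multidegree `w` is concentrated at `v` if there is an ordering of the vertices
starting at `v` such that each subsequent vertex becomes strictly negative after applying
the negative twists at all previous vertices in the ordering. -/
def Concentrated {V : Type*} [Fintype V] [DecidableEq V] (m : V → V → ℕ) (w : V → ℤ)
    (v : V) : Prop :=
  ∃ l : List V, l.Nodup ∧ (∀ u, u ∈ l) ∧ l.head? = some v ∧
    ∀ (i : ℕ) (h : i < l.length), 0 < i →
      ((l.take i).foldl (negTwist m) w) (l.get ⟨i, h⟩) < 0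

/-- Folding negative twists over a list not containing `x` just subtracts the edge counts. -/
lemma foldl_negTwist_not_mem {V : Type*} [Fintype V] [DecidableEq V] (m : V → V → ℕ)
    (l : List V) (x : V) (hx : x ∉ l) (w : V → ℤ) :
    (l.foldl (negTwist m) w) x = w x - ((l.map fun p => (m p x : ℤ)).sum) := by
  induction l generalizing w with
  | nil => simp
  | cons a t ih =>
    have hxa : x ≠ a := fun h => hx (h ▸ (List.mem_cons_self : a ∈ a :: t))
    have hxt : x ∉ t := fun h => hx (List.mem_cons_of_mem a h)
    simp only [List.foldl_cons, List.map_cons, List.sum_cons]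
    rw [ih hxt]
    simp [negTwist, hxa]
    ring

/-- `Good` lists: each vertex after the first is adjacent to some earlier vertex. -/
def GoodList {V : Type*} (m : V → V → ℕ) (l : List V) : Prop :=
  ∀ (i : ℕ) (h : i < l.length), 0 < i → ∃ p ∈ l.take i, 0 < m p (l.get ⟨i, h⟩)

lemma exists_extension {V : Type*} [Fintype V] [DecidableEq V] (m : V → V → ℕ)
    (hconn : MGConnected m) (l : List V) (v : V) (hv : v ∈ l) (u : V) (hu : u ∉ l) :
    ∃ u' ∉ l, ∃ p ∈ l, 0 < m p u' := by
  have key : ∀ z : V, Relation.ReflTransGen (fun a b => 0 < m a b) v z →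
      z ∈ l ∨ ∃ u' ∉ l, ∃ p ∈ l, 0 < m p u' := by
    intro z hz
    induction hz with
    | refl => exact Or.inl hv
    | @tail b c _ hbc ih =>
      rcases ih with hb | h
      · by_cases hc : c ∈ l
        · exact Or.inl hc
        · exact Or.inr ⟨c, hc, b, hb, hbc⟩
      · exact Or.inr h
    
  rcases key u (hconn v u) with h | h
  · exact absurd h hu
  · exact h

lemma exists_good_ordering {V : Type*} [Fintype V] [DecidableEq V] (m : V → V → ℕ)
    (hconn : MGConnected m) (v : V) :
    ∃ l : List V, l.Nodup ∧ (∀ u, u ∈ l) ∧ l.head? = some v ∧ GoodList m l := by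
  suffices H : ∀ n (l : List V), l.Nodup → l.head? = some v → GoodList m l →
      Fintype.card V ≤ l.length + n →
      ∃ l' : List V, l'.Nodup ∧ (∀ u, u ∈ l') ∧ l'.head? = some v ∧ GoodList m l' by
    refine H (Fintype.card V) [v] (by simp) rfl ?_ (by simp)
    intro i h hi; simp at h; omega
  intro n
  induction n with
  | zero =>
    intro l hnd hhead hgood hcard
    refine ⟨l, hnd, ?_, hhead, hgood⟩
    intro u
    have h1 : l.toFinset.card = l.length := List.toFinset_card_of_nodup hnd
    have h2 : l.toFinset = Finset.univ := by
      apply Finset.eq_univ_of_card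
      have := Finset.card_le_univ l.toFinset
      omega
    have : u ∈ l.toFinset := h2 ▸ Finset.mem_univ u
    simpa using this
  | succ n ih =>
    intro l hnd hhead hgood hcard
    by_cases hall : ∀ u, u ∈ l
    · exact ⟨l, hnd, hall, hhead, hgood⟩
    · push_neg at hall
      obtain ⟨u, hu⟩ := hall
      have hv : v ∈ l := by
        cases l with
        | nil => simp at hhead
        | cons a t => simp at hhead; subst hhead; exact List.mem_cons_self
      obtain ⟨u', hu', p, hp, hpm⟩ := exists_extension m hconn l v hv u hu
      refine ih (l ++ [u']) ?_ ?_ ?_ ?_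
      · simp [List.nodup_append, hnd, hu']
        intro a ha hau; subst hau; exact hu' ha
      · cases l with
        | nil => simp at hhead
        | cons a t => simpa using hhead
      · intro i h hi
        rcases lt_or_eq_of_le (Nat.lt_succ_iff.mp (by simpa using h)) with hlt | heq
        · have h' : i < l.length := hlt
          have hget : (l ++ [u']).get ⟨i, h⟩ = l.get ⟨i, h'⟩ := List.getElem_append_left h'
          have htake : (l ++ [u']).take i = l.take i :=
            List.take_append_of_le_length (le_of_lt h')
          rw [hget, htake]
          exact hgood i h' hi
        · have hget : (l ++ [u']).get ⟨i, h⟩ = u' := List.getElem_concat_length heq h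
          have htake : (l ++ [u']).take i = l := by
            rw [List.take_append_of_le_length (le_of_eq heq), heq, List.take_length]
          rw [hget, htake]
          exact ⟨p, hp, hpm⟩
      · simp; omega

/-- For the trivial chain structure, a multidegree which is nonpositive away from `v` is
concentrated at `v`. -/
theorem concentrated_of_nonpos {V : Type*} [Fintype V] [DecidableEq V] [Nonempty V]
    (m : V → V → ℕ) (hsymm : ∀ u v, m u v = m v u) (hloop : ∀ v, m v v = 0)
    (hconn : MGConnected m) (w : V → ℤ) (v : V)
    (hw : ∀ v', v' ≠ v → w v' ≤ 0) :
    Concentrated m w v := by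
  obtain ⟨l, hnd, hall, hhead, hgood⟩ := exists_good_ordering m hconn v
  refine ⟨l, hnd, hall, hhead, ?_⟩
  intro i h hi
  set x := l.get ⟨i, h⟩ with hx
  have hxnot : x ∉ l.take i := by
    intro hmem
    obtain ⟨j, hj, hje⟩ := List.getElem_of_mem hmem
    have hj2 : j < i := lt_of_lt_of_le hj (by simp [List.length_take])
    have hj' : j < l.length := lt_trans hj2 h
    have : l[j] = l[i] := by
      rw [← List.getElem_take (xs := l) (h := hj)]
      exact hje
    have := (hnd.getElem_inj_iff).mp this
    omega
  rw [foldl_negTwist_not_mem m (l.take i) x hxnot w]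
  have hxv : x ≠ v := by
    intro hxv
    have h0 : 0 < l.length := lt_trans hi h
    have hv0 : l[0] = v := by
      cases l with
      | nil => simp at hhead
      | cons a t => simp at hhead; simp [hhead]
    have : l[i] = l[0] := by rw [hv0]; exact hxv
    have := (hnd.getElem_inj_iff).mp this
    omega
  have hwx : w x ≤ 0 := hw x hxv
  obtain ⟨p, hp, hpm⟩ := hgood i h hi
  have hmem : (m p x : ℤ) ∈ (l.take i).map fun q => (m q x : ℤ) :=
    List.mem_map_of_mem hp
  have hnonneg : ∀ y ∈ (l.take i).map fun q => (m q x : ℤ), 0 ≤ y := by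
    intro y hy
    obtain ⟨q, _, rfl⟩ := List.mem_map.mp hy
    positivity
  have hle : (m p x : ℤ) ≤ ((l.take i).map fun q => (m q x : ℤ)).sum :=
    List.single_le_sum hnonneg _ hmem
  have : (0 : ℤ) < (m p x : ℤ) := by exact_mod_cast hpm
  omega
end

section
/- Let k be a field, E₁,…,Eₙ be d-dimensional k-vector spaces with linear maps fᵢ : Eᵢ → Eᵢ₊₁ and fⁱ : Eᵢ₊₁ → Eᵢ forming an s-linked chain with s = 0 (so fᵢ∘fⁱ = 0 and fⁱ∘fᵢ = 0, ker fⁱ = im fᵢ, ker fᵢ = im fⁱ, and im fᵢ ∩ ker fᵢ₊₁ = 0, im fⁱ⁺¹ ∩ ker fⁱ = 0). Let F₁ ⊆ E₁ and Fₙ ⊆ Eₙ be r-dimensional subspaces, and suppose that for each i the kernel Kᵢ of the map Eᵢ → (E₁/F₁) ⊕ (Eₙ/Fₙ) (given by composing the chain maps) has dimension at least r. Then there exist r-dimensional subspaces Fᵢ ⊆ Eᵢ for i = 2,…,n−1 with fᵢ(Fᵢ) ⊆ Fᵢ₊₁ and fⁱ(Fᵢ₊₁) ⊆ Fᵢ for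 all i (where F₁, Fₙ are the given subspaces). -/
open LinearMap FiniteDimensional

/-- Rank–nullity for the restriction of a linear map to a submodule. -/
private lemma aux_rank_nullity {k V W : Type*} [Field k] [AddCommGroup V] [Module k V]
    [AddCommGroup W] [Module k W] [FiniteDimensional k V]
    (φ : V →ₗ[k] W) (p : Submodule k V) :
    Module.finrank k ↥(p.map φ) + Module.finrank k ↥(p ⊓ LinearMap.ker φ) =
      Module.finrank k ↥p := by
  have h := LinearMap.finrank_range_add_finrank_ker (φ.domRestrict p)
  rw [LinearMap.range_domRestrict] at h
  have h2 : Submodule.map p.subtype (LinearMap.ker (φ.domRestrict p))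
      = p ⊓ LinearMap.ker φ := by
    ext x
    simp only [Submodule.mem_map, LinearMap.mem_ker, LinearMap.domRestrict_apply,
      Submodule.mem_inf]
    constructor
    · rintro ⟨⟨y, hy⟩, h1, rfl⟩
      exact ⟨hy, h1⟩
    · rintro ⟨hx, hx2⟩
      exact ⟨⟨x, hx⟩, hx2, rfl⟩
  rw [← h2, Submodule.finrank_map_subtype_eq]
  exact h

/-- Between two nested submodules one can find a submodule of any intermediate
dimension. -/
private lemma aux_between {k V : Type*} [Field k] [AddCommGroup V] [Module k V]
    [FiniteDimensional k V] (A C : Submodule k V) (hAC : A ≤ C) (r : ℕ)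
    (h1 : Module.finrank k ↥A ≤ r) (h2 : r ≤ Module.finrank k ↥C) :
    ∃ W : Submodule k V, A ≤ W ∧ W ≤ C ∧ Module.finrank k ↥W = r := by
  revert h2
  induction r, h1 using Nat.le_induction with
  | base => exact fun _ => ⟨A, le_rfl, hAC, rfl⟩
  | succ r hr IH =>
    intro h2
    obtain ⟨W, hAW, hWC, hWr⟩ := IH (by omega)
    have hne : W ≠ C := by
      intro h
      rw [h] at hWr
      omega
    obtain ⟨x, hxC, hxW⟩ := SetLike.exists_of_lt (lt_of_le_of_ne hWC hne)
    have hx0 : x ≠ 0 := fun h => hxW (h ▸ W.zero_mem)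
    have hinf : W ⊓ Submodule.span k {x} = ⊥ := by
      rw [eq_bot_iff]
      intro y hy
      rw [Submodule.mem_inf] at hy
      obtain ⟨hyW, hySp⟩ := hy
      obtain ⟨c, rfl⟩ := Submodule.mem_span_singleton.mp hySp
      rcases eq_or_ne c 0 with rfl | hc
      · simp
      · exact absurd (by simpa [smul_smul, inv_mul_cancel₀ hc] using W.smul_mem c⁻¹ hyW) hxW
    have hsum := Submodule.finrank_sup_add_finrank_inf_eq W (Submodule.span k {x})
    rw [hinf, finrank_bot, finrank_span_singleton hx0] at hsum
    refine ⟨W ⊔ Submodule.span k {x}, hAW.trans le_sup_left, sup_le hWC ?_, by omega⟩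
    rw [Submodule.span_le, Set.singleton_subset_iff]
    exact hxC

/-- Proposition `lg-project`, pointwise form.  Given a `0`-linked chain
`E 0, …, E N` of `d`-dimensional vector spaces (with `N = n - 1`), `r`-dimensional
subspaces `F₀ ⊆ E 0` and `Fₙ ⊆ E N`, and composite maps `L i : E i → E 0`,
`R i : E i → E N` obtained by composing the chain maps, if for each `i` the kernel
`K i` of `E i → (E 0 / F₀) ⊕ (E N / Fₙ)` (i.e. `L i ⁻¹ F₀ ⊓ R i ⁻¹ Fₙ`) has dimension at
least `r`, then there exist `r`-dimensional subspaces `F i ⊆ E i` interpolating between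
`F₀` and `Fₙ` and linked by the chain maps. -/
theorem linked_determinantal_lift {k : Type*} [Field k] (N d r : ℕ)
    (E : ℕ → Type*) [∀ i, AddCommGroup (E i)] [∀ i, Module k (E i)]
    [∀ i, FiniteDimensional k (E i)] (hdim : ∀ i ≤ N, Module.finrank k (E i) = d)
    (f : ∀ i, E i →ₗ[k] E (i + 1)) (g : ∀ i, E (i + 1) →ₗ[k] E i)
    (hfg : ∀ i < N, (f i).comp (g i) = 0)
    (hgf : ∀ i < N, (g i).comp (f i) = 0)
    (hexact₁ : ∀ i < N, LinearMap.ker (g i) = LinearMap.range (f i))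
    (hexact₂ : ∀ i < N, LinearMap.ker (f i) = LinearMap.range (g i))
    (hint₁ : ∀ i, i + 1 < N → LinearMap.range (f i) ⊓ LinearMap.ker (f (i + 1)) = ⊥)
    (hint₂ : ∀ i, i + 1 < N → LinearMap.range (g (i + 1)) ⊓ LinearMap.ker (g i) = ⊥)
    (F₀ : Submodule k (E 0)) (Fₙ : Submodule k (E N))
    (hF₀ : Module.finrank k F₀ = r) (hFₙ : Module.finrank k Fₙ = r)
    (L : ∀ i, E i →ₗ[k] E 0) (hL0 : L 0 = LinearMap.id)
    (hL : ∀ i < N, L (i + 1) = (L i).comp (g i))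
    (R : ∀ i, E i →ₗ[k] E N) (hRN : R N = LinearMap.id)
    (hR : ∀ i < N, R i = (R (i + 1)).comp (f i))
    (hK : ∀ i ≤ N, r ≤ Module.finrank k ↥(F₀.comap (L i) ⊓ Fₙ.comap (R i))) :
    ∃ F : ∀ i, Submodule k (E i), F 0 = F₀ ∧ F N = Fₙ ∧
      (∀ i ≤ N, Module.finrank k (F i) = r) ∧
      (∀ i < N, (F i).map (f i) ≤ F (i + 1) ∧ (F (i + 1)).map (g i) ≤ F i) := by
  classical
  -- The kernels `K i`.
  have hK0 : F₀.comap (L 0) ⊓ Fₙ.comap (R 0) = F₀ := by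
    refine Submodule.eq_of_le_of_finrank_le ?_ ?_
    · refine le_trans inf_le_left ?_
      rw [hL0, Submodule.comap_id]
    · rw [hF₀]
      exact hK 0 (Nat.zero_le N)
  have hKN : F₀.comap (L N) ⊓ Fₙ.comap (R N) = Fₙ := by
    refine Submodule.eq_of_le_of_finrank_le ?_ ?_
    · refine le_trans inf_le_right ?_
      rw [hRN, Submodule.comap_id]
    · rw [hFₙ]
      exact hK N le_rfl
  have hKlink : ∀ i < N,
      (F₀.comap (L i) ⊓ Fₙ.comap (R i)).map (f i) ≤
        F₀.comap (L (i + 1)) ⊓ Fₙ.comap (R (i + 1)) ∧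
      (F₀.comap (L (i + 1)) ⊓ Fₙ.comap (R (i + 1))).map (g i) ≤
        F₀.comap (L i) ⊓ Fₙ.comap (R i) := by
    intro i hi
    constructor
    · rw [Submodule.map_le_iff_le_comap]
      intro x hx
      rw [Submodule.mem_inf, Submodule.mem_comap, Submodule.mem_comap] at hx
      rw [Submodule.mem_comap, Submodule.mem_inf, Submodule.mem_comap, Submodule.mem_comap]
      constructor
      · rw [hL i hi]
        have hz : g i (f i x) = 0 := LinearMap.ext_iff.mp (hgf i hi) x
        show L i (g i (f i x)) ∈ F₀
        rw [hz, map_zero]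
        exact F₀.zero_mem
      · have : R i x = R (i + 1) (f i x) := by rw [hR i hi]; rfl
        rw [← this]
        exact hx.2
    · rw [Submodule.map_le_iff_le_comap]
      intro x hx
      rw [Submodule.mem_inf, Submodule.mem_comap, Submodule.mem_comap] at hx
      rw [Submodule.mem_comap, Submodule.mem_inf, Submodule.mem_comap, Submodule.mem_comap]
      constructor
      · have : L (i + 1) x = L i (g i x) := by rw [hL i hi]; rfl
        rw [← this]
        exact hx.1
      · rw [hR i hi]
        have hz : f i (g i x) = 0 := LinearMap.ext_iff.mp (hfg i hi) x
        show R (i + 1) (f i (g i x)) ∈ Fₙ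
        rw [hz, map_zero]
        exact Fₙ.zero_mem
  -- Main induction: shrink the kernels one index at a time.
  have main : ∀ m : ℕ, ∃ G : ∀ i, Submodule k (E i),
      G 0 = F₀ ∧ G N = Fₙ ∧ (∀ i ≤ N, r ≤ Module.finrank k ↥(G i)) ∧
      (∀ i, i ≤ N → i ≤ m → Module.finrank k ↥(G i) = r) ∧
      (∀ i < N, (G i).map (f i) ≤ G (i + 1) ∧ (G (i + 1)).map (g i) ≤ G i) := by
    intro m
    induction m with
    | zero =>
      refine ⟨fun i => F₀.comap (L i) ⊓ Fₙ.comap (R i), hK0, hKN, hK, ?_, hKlink⟩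
      intro i hiN hi0
      obtain rfl : i = 0 := Nat.le_zero.mp hi0
      show Module.finrank k ↥(F₀.comap (L 0) ⊓ Fₙ.comap (R 0)) = r
      rw [hK0]
      exact hF₀
    | succ m IH =>
      obtain ⟨G, hG0, hGN, hGr, hGeq, hGlink⟩ := IH
      by_cases hmN : m + 1 ≤ N
      swap
      · exact ⟨G, hG0, hGN, hGr, fun i hiN him => hGeq i hiN (by omega), hGlink⟩
      by_cases hrm : Module.finrank k ↥(G (m + 1)) = r
      · refine ⟨G, hG0, hGN, hGr, fun i hiN him => ?_, hGlink⟩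
        rcases Nat.lt_or_ge i (m + 1) with h | h
        · exact hGeq i hiN (by omega)
        · have hi : i = m + 1 := by omega
          rw [hi]
          exact hrm
      -- the shrinking step
      have hmN' : m + 1 < N := by
        rcases lt_or_eq_of_le hmN with h | h
        · exact h
        · exact absurd (by rw [h, hGN, hFₙ]) hrm
      have hGm : Module.finrank k ↥(G m) = r := hGeq m (by omega) le_rfl
      have hAle : (G m).map (f m) ≤ G (m + 1) := (hGlink m (by omega)).1
      have hBle : (G (m + 2)).map (g (m + 1)) ≤ G (m + 1) := (hGlink (m + 1) hmN').2
      have h1 := aux_rank_nullity (f m) (G m)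
      rw [hGm] at h1
      -- the image of `G (m+2)` under `g (m+1)` injects (via `g m`) into `G m ⊓ ker (f m)`
      have hBker : (G (m + 2)).map (g (m + 1)) ⊓ LinearMap.ker (g m) = ⊥ := by
        rw [← le_bot_iff, ← hint₂ m hmN']
        exact inf_le_inf_right _ LinearMap.map_le_range
      have h2 := aux_rank_nullity (g m) ((G (m + 2)).map (g (m + 1)))
      rw [hBker, finrank_bot, add_zero] at h2
      have hBmap : ((G (m + 2)).map (g (m + 1))).map (g m) ≤ G m ⊓ LinearMap.ker (f m) := by
        refine le_inf ?_ ?_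
        · exact le_trans (Submodule.map_mono hBle) (hGlink m (by omega)).2
        · rw [hexact₂ m (by omega)]
          exact LinearMap.map_le_range
      have hBfin : Module.finrank k ↥((G (m + 2)).map (g (m + 1))) ≤
          Module.finrank k ↥(G m ⊓ LinearMap.ker (f m)) := by
        rw [← h2]
        exact Submodule.finrank_mono hBmap
      have h3 := Submodule.finrank_sup_add_finrank_inf_eq
        ((G m).map (f m)) ((G (m + 2)).map (g (m + 1)))
      have hABr : Module.finrank k
          ↥((G m).map (f m) ⊔ (G (m + 2)).map (g (m + 1))) ≤ r := by omega
      obtain ⟨W, hW1, hW2, hW3⟩ := aux_between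
        ((G m).map (f m) ⊔ (G (m + 2)).map (g (m + 1))) (G (m + 1))
        (sup_le hAle hBle) r hABr (hGr (m + 1) (le_of_lt hmN'))
      refine ⟨Function.update G (m + 1) W, ?_, ?_, ?_, ?_, ?_⟩
      · rw [Function.update_of_ne (by omega : (0 : ℕ) ≠ m + 1)]
        exact hG0
      · rw [Function.update_of_ne (by omega : N ≠ m + 1)]
        exact hGN
      · intro i hiN
        rcases eq_or_ne i (m + 1) with rfl | hne
        · rw [Function.update_self]
          exact le_of_eq hW3.symm
        · rw [Function.update_of_ne hne]
          exact hGr i hiN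
      · intro i hiN him
        rcases eq_or_ne i (m + 1) with rfl | hne
        · rw [Function.update_self]
          exact hW3
        · rw [Function.update_of_ne hne]
          exact hGeq i hiN (by omega)
      · intro i hiN'
        rcases eq_or_ne i m with rfl | hne1
        · constructor
          · rw [Function.update_of_ne (by omega : i ≠ i + 1), Function.update_self]
            exact le_trans le_sup_left hW1
          · rw [Function.update_self, Function.update_of_ne (by omega : i ≠ i + 1)]
            exact le_trans (Submodule.map_mono hW2) (hGlink i (by omega)).2
        rcases eq_or_ne i (m + 1) with rfl | hne2
        · constructor
          · rw [Function.update_self, Function.update_of_ne (by omega : m + 1 + 1 ≠ m + 1)]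
            exact le_trans (Submodule.map_mono hW2) (hGlink (m + 1) hmN').1
          · rw [Function.update_of_ne (by omega : m + 1 + 1 ≠ m + 1), Function.update_self]
            exact le_trans le_sup_right hW1
        · rw [Function.update_of_ne hne2, Function.update_of_ne (by omega : i + 1 ≠ m + 1)]
          exact hGlink i hiN'
  obtain ⟨G, hG0, hGN, hGr, hGeq, hGlink⟩ := main N
  exact ⟨G, hG0, hGN, fun i hi => hGeq i hi hi, hGlink⟩
end

section
/- Let R be a discrete valuation ring with residue field k and let x ∈ R. Let A, B be d×d matrices over k with AB = BA = x̄·I (where x̄ is the image of x in k) and rank A + rank B ≥ d. Then there exist d×d matrices Ã, B̃ over R lifting A and B with ÃB̃ = B̃Ã = x·I. -/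
open IsLocalRing
open Matrix

/-- map of a smul matrix under a ring hom -/
lemma matrix_map_smul {R S : Type*} [CommRing R] [CommRing S] (f : R →+* S)
    {m n : Type*} (x : R) (M : Matrix m n R) :
    (x • M).map f = f x • M.map f := by
  ext i j
  simp [Matrix.map_apply, Matrix.smul_apply]

/-- Lifting a pair of mutually inverse matrices over the residue field of a local ring. -/
lemma lift_invertible_pair {R : Type*} [CommRing R] [IsLocalRing R] {d : ℕ}
    (P Pi : Matrix (Fin d) (Fin d) (ResidueField R))
    (h1 : P * Pi = 1) (h2 : Pi * P = 1) :
    ∃ P' Pi' : Matrix (Fin d) (Fin d) R,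
      P'.map (residue R) = P ∧ Pi'.map (residue R) = Pi ∧ P' * Pi' = 1 ∧ Pi' * P' = 1 := by
  have hsurj : Function.Surjective (residue R) := Ideal.Quotient.mk_surjective
  choose lift hlift using hsurj
  set P' : Matrix (Fin d) (Fin d) R := Matrix.of fun i j => lift (P i j) with hP'
  have hmapP : P'.map (residue R) = P := by
    ext i j
    simp [hP', Matrix.map_apply, hlift]
  have hdet : IsUnit P'.det := by
    have hres : residue R P'.det = P.det := by
      rw [RingHom.map_det, RingHom.mapMatrix_apply, hmapP]
    by_contra hu
    have hmem : P'.det ∈ maximalIdeal R := hu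
    have : residue R P'.det = 0 := Ideal.Quotient.eq_zero_iff_mem.mpr hmem
    rw [hres] at this
    have hPdet : IsUnit P.det := by
      apply IsUnit.of_mul_eq_one Pi.det
      rw [← Matrix.det_mul, h1, Matrix.det_one]
    rw [this] at hPdet
    exact not_isUnit_zero hPdet
  have := P'.invertibleOfIsUnitDet hdet
  refine ⟨P', ⅟P', hmapP, ?_, mul_invOf_self P', invOf_mul_self P'⟩
  have h3 : P * (⅟P').map (residue R) = 1 := by
    rw [← hmapP, ← Matrix.map_mul, mul_invOf_self]
    exact Matrix.map_one _ (map_zero _) (map_one _)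
  calc (⅟P').map (residue R) = (Pi * P) * (⅟P').map (residue R) := by rw [h2, one_mul]
    _ = Pi * (P * (⅟P').map (residue R)) := by rw [mul_assoc]
    _ = Pi := by rw [h3, mul_one]


noncomputable def sumEquiv {a b d : ℕ} (hab : a + b = d) : (Fin a ⊕ Fin b) ≃ Fin d :=
  finSumFinEquiv.trans (finCongr hab)

set_option maxHeartbeats 2000000 in
lemma pair_normal_form {K : Type*} [Field K] {d : ℕ} (A B : Matrix (Fin d) (Fin d) K)
    (hAB : A * B = 0) (hBA : B * A = 0) (hrank : d ≤ A.rank + B.rank) :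
    ∃ (a b : ℕ) (hab : a + b = d) (P Pi Q Qi : Matrix (Fin d) (Fin d) K),
      P * Pi = 1 ∧ Pi * P = 1 ∧ Q * Qi = 1 ∧ Qi * Q = 1 ∧
      A = P * ((fromBlocks (1 : Matrix (Fin a) (Fin a) K) 0 0
          (0 : Matrix (Fin b) (Fin b) K)).submatrix (sumEquiv hab).symm (sumEquiv hab).symm) * Q ∧
      B = Qi * ((fromBlocks (0 : Matrix (Fin a) (Fin a) K) 0 0
          (1 : Matrix (Fin b) (Fin b) K)).submatrix (sumEquiv hab).symm (sumEquiv hab).symm) * Pi := by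
  classical
  set f := A.mulVecLin with hf
  set g := B.mulVecLin with hg
  have hfg : f ∘ₗ g = 0 := by rw [hf, hg, ← Matrix.mulVecLin_mul, hAB, Matrix.mulVecLin_zero]
  have hgf : g ∘ₗ f = 0 := by rw [hf, hg, ← Matrix.mulVecLin_mul, hBA, Matrix.mulVecLin_zero]
  have hrgkf : LinearMap.range g ≤ LinearMap.ker f := LinearMap.range_le_ker_iff.2 hfg
  have hrfkg : LinearMap.range f ≤ LinearMap.ker g := LinearMap.range_le_ker_iff.2 hgf
  have hdimV : Module.finrank K (Fin d → K) = d := by simp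
  have hd1 := LinearMap.finrank_range_add_finrank_ker f
  rw [hdimV] at hd1
  have hd2 := LinearMap.finrank_range_add_finrank_ker g
  rw [hdimV] at hd2
  have hle1 : Module.finrank K (LinearMap.range g) ≤ Module.finrank K (LinearMap.ker f) :=
    Submodule.finrank_mono hrgkf
  have hle2 : Module.finrank K (LinearMap.range f) ≤ Module.finrank K (LinearMap.ker g) :=
    Submodule.finrank_mono hrfkg
  have hrA : A.rank = Module.finrank K (LinearMap.range f) := rfl
  have hrB : B.rank = Module.finrank K (LinearMap.range g) := rfl
  rw [hrA, hrB] at hrank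
  have hab : A.rank + B.rank = d := by rw [hrA, hrB]; omega
  have heq1 : Module.finrank K (LinearMap.range g) = Module.finrank K (LinearMap.ker f) := by
    omega
  have heq2 : Module.finrank K (LinearMap.range f) = Module.finrank K (LinearMap.ker g) := by
    omega
  have hgk : LinearMap.range g = LinearMap.ker f :=
    Submodule.eq_of_le_of_finrank_eq hrgkf heq1
  have hfk : LinearMap.range f = LinearMap.ker g :=
    Submodule.eq_of_le_of_finrank_eq hrfkg heq2
  obtain ⟨W, hW⟩ := Submodule.exists_isCompl (LinearMap.ker f)
  obtain ⟨U, hU⟩ := Submodule.exists_isCompl (LinearMap.ker g)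
  have hWd := Submodule.finrank_add_eq_of_isCompl hW
  rw [hdimV] at hWd
  have hUd := Submodule.finrank_add_eq_of_isCompl hU
  rw [hdimV] at hUd
  have hWa : Module.finrank K W = A.rank := by rw [hrA]; omega
  have hUb : Module.finrank K U = B.rank := by rw [hrB]; omega
  set bW : Module.Basis (Fin A.rank) K W := Module.finBasisOfFinrankEq K W hWa with hbW
  set bU : Module.Basis (Fin B.rank) K U := Module.finBasisOfFinrankEq K U hUb with hbU
  -- the equivalence W ≃ ker g given by f
  set eW : W ≃ₗ[K] LinearMap.ker g :=
    (((Submodule.quotientEquivOfIsCompl (LinearMap.ker f) W hW).symm.trans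
      f.quotKerEquivRange).trans (LinearEquiv.ofEq _ _ hfk)) with heW
  set eU : U ≃ₗ[K] LinearMap.ker f :=
    (((Submodule.quotientEquivOfIsCompl (LinearMap.ker g) U hU).symm.trans
      g.quotKerEquivRange).trans (LinearEquiv.ofEq _ _ hgk)) with heU
  have heWval : ∀ w : W, (eW w : Fin d → K) = f w := by
    intro w
    rw [heW]
    simp only [LinearEquiv.trans_apply, Submodule.quotientEquivOfIsCompl_symm_apply]
    rfl
  have heUval : ∀ u : U, (eU u : Fin d → K) = g u := by
    intro u
    rw [heU]
    simp only [LinearEquiv.trans_apply, Submodule.quotientEquivOfIsCompl_symm_apply]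
    rfl
  set bKf : Module.Basis (Fin B.rank) K (LinearMap.ker f) := bU.map eU with hbKf
  set bKg : Module.Basis (Fin A.rank) K (LinearMap.ker g) := bW.map eW with hbKg
  set srcB0 : Module.Basis (Fin A.rank ⊕ Fin B.rank) K (Fin d → K) :=
    (bW.prod bKf).map (Submodule.prodEquivOfIsCompl W (LinearMap.ker f) hW.symm) with hsrcB0
  set tgtB0 : Module.Basis (Fin A.rank ⊕ Fin B.rank) K (Fin d → K) :=
    (bKg.prod bU).map (Submodule.prodEquivOfIsCompl (LinearMap.ker g) U hU) with htgtB0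
  have hsrc_inl : ∀ i, srcB0 (Sum.inl i) = (bW i : Fin d → K) := by
    intro i
    rw [hsrcB0, Module.Basis.map_apply, Module.Basis.prod_apply]
    simp [Submodule.coe_prodEquivOfIsCompl']
  have hsrc_inr : ∀ j, srcB0 (Sum.inr j) = (bKf j : Fin d → K) := by
    intro j
    rw [hsrcB0, Module.Basis.map_apply, Module.Basis.prod_apply]
    simp [Submodule.coe_prodEquivOfIsCompl']
  have htgt_inl : ∀ i, tgtB0 (Sum.inl i) = (bKg i : Fin d → K) := by
    intro i
    rw [htgtB0, Module.Basis.map_apply, Module.Basis.prod_apply]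
    simp [Submodule.coe_prodEquivOfIsCompl']
  have htgt_inr : ∀ j, tgtB0 (Sum.inr j) = (bU j : Fin d → K) := by
    intro j
    rw [htgtB0, Module.Basis.map_apply, Module.Basis.prod_apply]
    simp [Submodule.coe_prodEquivOfIsCompl']
  -- matrix of f in the bases srcB0 → tgtB0
  have hM0 : LinearMap.toMatrix srcB0 tgtB0 f = fromBlocks 1 0 0 0 := by
    ext i j
    rw [LinearMap.toMatrix_apply]
    cases j with
    | inl j =>
      have : f (srcB0 (Sum.inl j)) = tgtB0 (Sum.inl j) := by
        rw [hsrc_inl, htgt_inl, hbKg, Module.Basis.map_apply, ← heWval]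
      rw [this, Module.Basis.repr_self]
      cases i with
      | inl i =>
        simp [Finsupp.single_apply, fromBlocks_apply₁₁, Matrix.one_apply, eq_comm]
      | inr i => simp [Finsupp.single_apply]
    | inr j =>
      have : f (srcB0 (Sum.inr j)) = 0 := by
        rw [hsrc_inr]
        exact (bKf j).2
      rw [this, map_zero]
      cases i <;> simp
  have hN0 : LinearMap.toMatrix tgtB0 srcB0 g = fromBlocks 0 0 0 1 := by
    ext i j
    rw [LinearMap.toMatrix_apply]
    cases j with
    | inl j =>
      have : g (tgtB0 (Sum.inl j)) = 0 := by
        rw [htgt_inl]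
        exact (bKg j).2
      rw [this, map_zero]
      cases i <;> simp
    | inr j =>
      have : g (tgtB0 (Sum.inr j)) = srcB0 (Sum.inr j) := by
        rw [htgt_inr, hsrc_inr, hbKf, Module.Basis.map_apply, ← heUval]
      rw [this, Module.Basis.repr_self]
      cases i with
      | inl i => simp [Finsupp.single_apply]
      | inr i =>
        simp [Finsupp.single_apply, Matrix.one_apply, eq_comm]
  -- reindex the bases to Fin d
  set e := sumEquiv hab with he
  set srcB := srcB0.reindex e with hsrcB
  set tgtB := tgtB0.reindex e with htgtB
  have reindex_toMatrix : ∀ (h : (Fin d → K) →ₗ[K] (Fin d → K))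
      (b1 c1 : Module.Basis (Fin A.rank ⊕ Fin B.rank) K (Fin d → K)),
      LinearMap.toMatrix (b1.reindex e) (c1.reindex e) h =
        (LinearMap.toMatrix b1 c1 h).submatrix e.symm e.symm := by
    intro h b1 c1
    ext i j
    rw [LinearMap.toMatrix_apply, Module.Basis.reindex_apply, Module.Basis.repr_reindex_apply,
      Matrix.submatrix_apply, LinearMap.toMatrix_apply]
  set std : Module.Basis (Fin d) K (Fin d → K) := Pi.basisFun K (Fin d) with hstd
  refine ⟨A.rank, B.rank, hab, std.toMatrix tgtB, tgtB.toMatrix std, srcB.toMatrix std, std.toMatrix srcB,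
    Module.Basis.toMatrix_mul_toMatrix_flip _ _, Module.Basis.toMatrix_mul_toMatrix_flip _ _,
    Module.Basis.toMatrix_mul_toMatrix_flip _ _, Module.Basis.toMatrix_mul_toMatrix_flip _ _, ?_, ?_⟩
  · have h1 : std.toMatrix tgtB * LinearMap.toMatrix srcB tgtB f * srcB.toMatrix std =
        LinearMap.toMatrix std std f :=
      basis_toMatrix_mul_linearMap_toMatrix_mul_basis_toMatrix std srcB std tgtB f
    rw [hsrcB, htgtB, reindex_toMatrix, hM0, ← hsrcB, ← htgtB] at h1
    rw [← he, h1, hstd, LinearMap.toMatrix_eq_toMatrix', hf, ← Matrix.toLin'_apply']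
    rw [LinearMap.toMatrix'_toLin']
  · have h1 : std.toMatrix srcB * LinearMap.toMatrix tgtB srcB g * tgtB.toMatrix std =
        LinearMap.toMatrix std std g :=
      basis_toMatrix_mul_linearMap_toMatrix_mul_basis_toMatrix std tgtB std srcB g
    rw [htgtB, hsrcB, reindex_toMatrix, hN0, ← htgtB, ← hsrcB] at h1
    rw [← he, h1, hstd, LinearMap.toMatrix_eq_toMatrix', hg, ← Matrix.toLin'_apply']
    rw [LinearMap.toMatrix'_toLin']


/-- Lifting of pairs of matrices over the residue field of a DVR:  if `A B = B A = x̄ I`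
over the residue field with `rank A + rank B ≥ d`, then `A, B` lift to matrices over `R`
with product `x I` on both sides. -/
theorem matrix_pair_lift_dvr {R : Type*} [CommRing R] [IsDomain R]
    [IsDiscreteValuationRing R] (d : ℕ) (x : R)
    (A B : Matrix (Fin d) (Fin d) (ResidueField R))
    (hAB : A * B = residue R x • (1 : Matrix (Fin d) (Fin d) (ResidueField R)))
    (hBA : B * A = residue R x • (1 : Matrix (Fin d) (Fin d) (ResidueField R)))
    (hrank : d ≤ A.rank + B.rank) :
    ∃ A' B' : Matrix (Fin d) (Fin d) R,
      A'.map (residue R) = A ∧ B'.map (residue R) = B ∧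
      A' * B' = x • (1 : Matrix (Fin d) (Fin d) R) ∧
      B' * A' = x • (1 : Matrix (Fin d) (Fin d) R) := by
  classical
  by_cases hx : IsUnit x
  · -- `x` is a unit: `A` is invertible and we set `B' = x • A'⁻¹`.
    have hru : IsUnit (residue R x) := hx.map (residue R)
    have hrne : residue R x ≠ 0 := hru.ne_zero
    have h1 : A * ((residue R x)⁻¹ • B) = 1 := by
      rw [Matrix.mul_smul, hAB, smul_smul, inv_mul_cancel₀ hrne, one_smul]
    have h2 : ((residue R x)⁻¹ • B) * A = 1 := by
      rw [Matrix.smul_mul, hBA, smul_smul, inv_mul_cancel₀ hrne, one_smul]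
    obtain ⟨A', Ai', hmA, hmAi, hp1, hp2⟩ := lift_invertible_pair A _ h1 h2
    refine ⟨A', x • Ai', hmA, ?_, ?_, ?_⟩
    · rw [matrix_map_smul, hmAi, smul_smul, mul_inv_cancel₀ hrne, one_smul]
    · rw [Matrix.mul_smul, hp1]
    · rw [Matrix.smul_mul, hp2]
  · -- `x` lies in the maximal ideal
    have hmem : x ∈ maximalIdeal R := by
      rw [IsLocalRing.mem_maximalIdeal]
      exact hx
    have hres0 : residue R x = 0 := Ideal.Quotient.eq_zero_iff_mem.mpr hmem
    rw [hres0, zero_smul] at hAB hBA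
    obtain ⟨a, b, hab, P, Pi, Q, Qi, hPPi, hPiP, hQQi, hQiQ, hA, hB⟩ :=
      pair_normal_form A B hAB hBA hrank
    obtain ⟨P', Pi', hmP, hmPi, hP1, hP2⟩ := lift_invertible_pair P Pi hPPi hPiP
    obtain ⟨Q', Qi', hmQ, hmQi, hQ1, hQ2⟩ := lift_invertible_pair Q Qi hQQi hQiQ
    set es := (sumEquiv hab).symm with hes
    set E1 : Matrix (Fin d) (Fin d) R :=
      (fromBlocks (1 : Matrix (Fin a) (Fin a) R) 0 0
        (x • (1 : Matrix (Fin b) (Fin b) R))).submatrix es es with hE1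
    set E2 : Matrix (Fin d) (Fin d) R :=
      (fromBlocks (x • (1 : Matrix (Fin a) (Fin a) R)) 0 0
        (1 : Matrix (Fin b) (Fin b) R)).submatrix es es with hE2
    have hone : (x • (1 : Matrix (Fin a ⊕ Fin b) (Fin a ⊕ Fin b) R)) =
        fromBlocks (x • 1) 0 0 (x • 1) := by
      rw [← fromBlocks_one, fromBlocks_smul]
      simp
    have hprod1 : (fromBlocks (1 : Matrix (Fin a) (Fin a) R) 0 0
        (x • (1 : Matrix (Fin b) (Fin b) R))) *
        (fromBlocks (x • (1 : Matrix (Fin a) (Fin a) R)) 0 0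
        (1 : Matrix (Fin b) (Fin b) R)) = x • 1 := by
      rw [fromBlocks_multiply, hone]
      congr 1 <;> simp
    have hprod2 : (fromBlocks (x • (1 : Matrix (Fin a) (Fin a) R)) 0 0
        (1 : Matrix (Fin b) (Fin b) R)) *
        (fromBlocks (1 : Matrix (Fin a) (Fin a) R) 0 0
        (x • (1 : Matrix (Fin b) (Fin b) R))) = x • 1 := by
      rw [fromBlocks_multiply, hone]
      congr 1 <;> simp
    have hE12 : E1 * E2 = x • 1 := by
      rw [hE1, hE2, Matrix.submatrix_mul_equiv, hprod1]
      ext i j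
      simp [Matrix.submatrix_apply, Matrix.smul_apply, Matrix.one_apply,
        Equiv.apply_eq_iff_eq]
    have hE21 : E2 * E1 = x • 1 := by
      rw [hE1, hE2, Matrix.submatrix_mul_equiv, hprod2]
      ext i j
      simp [Matrix.submatrix_apply, Matrix.smul_apply, Matrix.one_apply,
        Equiv.apply_eq_iff_eq]
    have hmapE1 : E1.map (residue R) =
        (fromBlocks (1 : Matrix (Fin a) (Fin a) (ResidueField R)) 0 0
          (0 : Matrix (Fin b) (Fin b) (ResidueField R))).submatrix es es := by
      rw [hE1, ← Matrix.submatrix_map, Matrix.fromBlocks_map, matrix_map_smul, hres0,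
        zero_smul, Matrix.map_one _ (map_zero _) (map_one _),
        Matrix.map_zero _ (map_zero _), Matrix.map_zero _ (map_zero _)]
    have hmapE2 : E2.map (residue R) =
        (fromBlocks (0 : Matrix (Fin a) (Fin a) (ResidueField R)) 0 0
          (1 : Matrix (Fin b) (Fin b) (ResidueField R))).submatrix es es := by
      rw [hE2, ← Matrix.submatrix_map, Matrix.fromBlocks_map, matrix_map_smul, hres0,
        zero_smul, Matrix.map_one _ (map_zero _) (map_one _),
        Matrix.map_zero _ (map_zero _), Matrix.map_zero _ (map_zero _)]
    refine ⟨P' * E1 * Q', Qi' * E2 * Pi', ?_, ?_, ?_, ?_⟩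
    · rw [Matrix.map_mul, Matrix.map_mul, hmP, hmQ, hmapE1, hA, hes]
    · rw [Matrix.map_mul, Matrix.map_mul, hmQi, hmPi, hmapE2, hB, hes]
    · have hmid : Q' * (Qi' * (E2 * Pi')) = E2 * Pi' := by
        rw [← mul_assoc, hQ1, one_mul]
      calc P' * E1 * Q' * (Qi' * E2 * Pi')
          = P' * (E1 * (Q' * (Qi' * (E2 * Pi')))) := by
            simp only [mul_assoc]
        _ = P' * (E1 * E2 * Pi') := by rw [hmid, mul_assoc]
        _ = x • (P' * Pi') := by
            rw [hE12, Matrix.smul_mul, Matrix.mul_smul, Matrix.one_mul]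
        _ = x • 1 := by rw [hP1]
    · have hmid : Pi' * (P' * (E1 * Q')) = E1 * Q' := by
        rw [← mul_assoc, hP2, one_mul]
      calc Qi' * E2 * Pi' * (P' * E1 * Q')
          = Qi' * (E2 * (Pi' * (P' * (E1 * Q')))) := by
            simp only [mul_assoc]
        _ = Qi' * (E2 * E1 * Q') := by rw [hmid, mul_assoc]
        _ = x • (Qi' * Q') := by
            rw [hE21, Matrix.smul_mul, Matrix.mul_smul, Matrix.one_mul]
        _ = x • 1 := by rw [hQ2]
end

section
/- Let (a¹_ℓ)_{ℓ=0}^{r} and (a²_ℓ)_{ℓ=0}^{r} be the multivanishing sequences of an (r+1)-dimensional pair (V¹, V²) along divisor chains D¹•, D²• as in the two-component limit linear series setup, and for each i in 0,…,b let r_i denote the rank of the gluing map V¹(−D¹ᵢ) ⊕ V²(−D²_{b−i}) → L²(−D²_{b−i})/L²(−D²_{b−i+1}). If for every i the kernel of this gluing map has dimension at least r+1, then for every ℓ and every critical index i with a¹_ℓ = deg D¹ᵢ, one has a²_{r−ℓ} ≥ deg D²_{b−i}. -/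
open scoped Classical

open Module

set_option synthInstance.maxHeartbeats 400000
set_option maxHeartbeats 800000

private lemma step_mono {a : ℕ → ℕ} {r : ℕ} (h : ∀ ℓ < r, a ℓ ≤ a (ℓ + 1)) :
    ∀ {m n : ℕ}, m ≤ n → n ≤ r → a m ≤ a n := by
  intro m n hmn hnr
  induction n with
  | zero => simp [Nat.le_zero.mp hmn]
  | succ n ih =>
    rcases Nat.lt_or_ge m (n + 1) with h' | h'
    · exact le_trans (ih (Nat.lt_succ_iff.mp h') (by omega)) (h n (by omega))
    · have : m = n + 1 := by omega
      simp [this]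

/-- (Direction "(kernel condition) ⟹ (I)" of Lemma `compare-2-comps`, abstracted to
finite-dimensional vector spaces with filtrations and a pairing map.)  Here `W1 i`
plays the role of `V¹(−D¹ᵢ)`, `W2 j` of `V²(−D²ⱼ)`, `Q i` of
`L²(−D²_{b−i})/L²(−D²_{b−i+1})`, and `g1 i`, `g2 i` induce the gluing map at step `i`;
`a1`, `a2` are the multivanishing sequences (characterized by
`dim (W j) = #{ℓ ≤ r : a ℓ ≥ deg j}`), whose values occur at critical indices.  The
kernel of the restriction of the gluing map to `W1 i × W2 (b−i)` is assumed of dimension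
at least `r+1` for all `i ≤ b`, and the gluing map restricted to `W1 i` (resp.
`W2 (b−i)`) has kernel `W1 (i+1)` (resp. `W2 (b−i+1)`).  Then condition (I) holds: for
every `ℓ` and critical `i` with `a1 ℓ = deg1 i`, one has `a2 (r−ℓ) ≥ deg2 (b−i)`. -/
theorem gluing_kernel_implies_vanishing_duality {k H1 H2 : Type*} [Field k]
    [AddCommGroup H1] [Module k H1] [FiniteDimensional k H1]
    [AddCommGroup H2] [Module k H2] [FiniteDimensional k H2]
    (r b : ℕ) (Q : ℕ → Type*) [∀ i, AddCommGroup (Q i)] [∀ i, Module k (Q i)]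
    (W1 : ℕ → Submodule k H1) (W2 : ℕ → Submodule k H2)
    (g1 : ∀ i, H1 →ₗ[k] Q i) (g2 : ∀ i, H2 →ₗ[k] Q i)
    (hW1anti : ∀ i, W1 (i + 1) ≤ W1 i) (hW2anti : ∀ j, W2 (j + 1) ≤ W2 j)
    (hW1top : finrank k (W1 0) = r + 1) (hW1bot : W1 (b + 1) = ⊥)
    (hW2top : finrank k (W2 0) = r + 1) (hW2bot : W2 (b + 1) = ⊥)
    (a1 a2 deg1 deg2 : ℕ → ℕ)
    (ha1 : ∀ ℓ < r, a1 ℓ ≤ a1 (ℓ + 1)) (ha2 : ∀ ℓ < r, a2 ℓ ≤ a2 (ℓ + 1))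
    (hdeg1 : ∀ i ≤ b, deg1 i ≤ deg1 (i + 1)) (hdeg2 : ∀ j ≤ b, deg2 j ≤ deg2 (j + 1))
    (hchar1 : ∀ i ≤ b + 1, finrank k (W1 i) =
      ((Finset.range (r + 1)).filter (fun ℓ => deg1 i ≤ a1 ℓ)).card)
    (hchar2 : ∀ j ≤ b + 1, finrank k (W2 j) =
      ((Finset.range (r + 1)).filter (fun ℓ => deg2 j ≤ a2 ℓ)).card)
    (hval1 : ∀ ℓ ≤ r, ∃ i ≤ b, a1 ℓ = deg1 i ∧ deg1 i < deg1 (i + 1))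
    (hval2 : ∀ ℓ ≤ r, ∃ j ≤ b, a2 ℓ = deg2 j ∧ deg2 j < deg2 (j + 1))
    (hker1 : ∀ i ≤ b, W1 i ⊓ LinearMap.ker (g1 i) = W1 (i + 1))
    (hker2 : ∀ i ≤ b, W2 (b - i) ⊓ LinearMap.ker (g2 i) = W2 (b - i + 1))
    (hkernel : ∀ i ≤ b, r + 1 ≤ finrank k
      ↥((W1 i).prod (W2 (b - i)) ⊓ LinearMap.ker
        ((g1 i).comp (LinearMap.fst k H1 H2) - (g2 i).comp (LinearMap.snd k H1 H2)))) :
    ∀ ℓ ≤ r, ∀ i ≤ b, deg1 i < deg1 (i + 1) → a1 ℓ = deg1 i →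
      deg2 (b - i) ≤ a2 (r - ℓ) := by
  intro ℓ hℓ i hi hlt heq
  set S : Submodule k (H1 × H2) := (W1 i).prod (W2 (b - i)) ⊓ LinearMap.ker
      ((g1 i).comp (LinearMap.fst k H1 H2) - (g2 i).comp (LinearMap.snd k H1 H2)) with hS
  -- the projection of S to H2
  set f : S →ₗ[k] H2 := (LinearMap.snd k H1 H2).comp S.subtype with hf
  have hrn : finrank k (LinearMap.range f) + finrank k (LinearMap.ker f)
      = finrank k S := LinearMap.finrank_range_add_finrank_ker f
  -- range f ≤ W2 (b - i)
  have hrange : LinearMap.range f ≤ W2 (b - i) := by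
    rintro y ⟨⟨⟨x, y'⟩, hx⟩, rfl⟩
    exact hx.1.2
  have hrange' : finrank k (LinearMap.range f) ≤ finrank k (W2 (b - i)) :=
    Submodule.finrank_mono hrange
  -- ker f embeds into W1 (i+1)
  set ψ : LinearMap.ker f →ₗ[k] H1 :=
    (LinearMap.fst k H1 H2).comp (S.subtype.comp (LinearMap.ker f).subtype) with hψ
  have hsnd : ∀ z : LinearMap.ker f, ((z : S) : H1 × H2).2 = 0 := fun z =>
    LinearMap.mem_ker.mp z.2
  have hψinj : Function.Injective ψ := by
    intro z w hzw
    have h2 : ((z : S) : H1 × H2).2 = ((w : S) : H1 × H2).2 := by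
      rw [hsnd z, hsnd w]
    have h1 : ((z : S) : H1 × H2).1 = ((w : S) : H1 × H2).1 := hzw
    have : ((z : S) : H1 × H2) = ((w : S) : H1 × H2) := Prod.ext h1 h2
    exact Subtype.ext (Subtype.ext this)
  have hψrange : LinearMap.range ψ ≤ W1 (i + 1) := by
    rintro x ⟨z, rfl⟩
    have hz : ((z : S) : H1 × H2) ∈ S := (z : S).2
    obtain ⟨hp, hk⟩ := Submodule.mem_inf.mp hz
    have hzs : ((z : S) : H1 × H2).2 = 0 := hsnd z
    show ((z : S) : H1 × H2).1 ∈ W1 (i + 1)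
    rw [← hker1 i hi]
    refine Submodule.mem_inf.mpr ⟨(Submodule.mem_prod.mp hp).1, ?_⟩
    rw [LinearMap.mem_ker]
    have hk' : g1 i ((z : S) : H1 × H2).1 - g2 i ((z : S) : H1 × H2).2 = 0 :=
      LinearMap.mem_ker.mp hk
    rw [hzs, map_zero, sub_zero] at hk'
    exact hk'
  have hkerle : finrank k (LinearMap.ker f) ≤ finrank k (W1 (i + 1)) := by
    have := LinearMap.finrank_range_of_inj hψinj
    rw [← this]
    exact Submodule.finrank_mono hψrange
  -- combinatorics: finrank (W1 (i+1)) ≤ r - ℓ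
  have hW1succ : finrank k (W1 (i + 1)) ≤ r - ℓ := by
    rw [hchar1 (i + 1) (by omega)]
    have hsub : ((Finset.range (r + 1)).filter (fun ℓ' => deg1 (i + 1) ≤ a1 ℓ')) ⊆
        Finset.Ico (ℓ + 1) (r + 1) := by
      intro x hx
      simp only [Finset.mem_filter, Finset.mem_range] at hx
      simp only [Finset.mem_Ico]
      refine ⟨?_, hx.1⟩
      by_contra hc
      have hxℓ : x ≤ ℓ := by omega
      have : a1 x ≤ a1 ℓ := step_mono ha1 hxℓ hℓ
      omega
    calc ((Finset.range (r + 1)).filter (fun ℓ' => deg1 (i + 1) ≤ a1 ℓ')).card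
        ≤ (Finset.Ico (ℓ + 1) (r + 1)).card := Finset.card_le_card hsub
      _ = r - ℓ := by rw [Nat.card_Ico]; omega
  -- so finrank (W2 (b - i)) ≥ ℓ + 1
  have hW2big : ℓ + 1 ≤ finrank k (W2 (b - i)) := by
    have hk := hkernel i hi
    rw [← hS] at hk
    omega
  -- extract an element of the filter that is ≤ r - ℓ
  have hcard : ℓ + 1 ≤ ((Finset.range (r + 1)).filter
      (fun ℓ' => deg2 (b - i) ≤ a2 ℓ')).card := by
    rw [← hchar2 (b - i) (by omega)]; exact hW2big
  have hex : ∃ x ∈ (Finset.range (r + 1)).filter (fun ℓ' => deg2 (b - i) ≤ a2 ℓ'),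
      x ≤ r - ℓ := by
    by_contra hc
    push_neg at hc
    have hsub : ((Finset.range (r + 1)).filter (fun ℓ' => deg2 (b - i) ≤ a2 ℓ')) ⊆
        Finset.Ico (r - ℓ + 1) (r + 1) := by
      intro x hx
      have := hc x hx
      simp only [Finset.mem_filter, Finset.mem_range] at hx
      simp only [Finset.mem_Ico]
      omega
    have := Finset.card_le_card hsub
    rw [Nat.card_Ico] at this
    omega
  obtain ⟨x, hxmem, hxle⟩ := hex
  simp only [Finset.mem_filter, Finset.mem_range] at hxmem
  exact le_trans hxmem.2 (step_mono ha2 hxle (by omega))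
end

section
/- Let Γ be a multitree (a finite connected loopless multigraph which becomes a tree after collapsing multiple edges) with a chain structure, and let (e,v) be an edge-vertex incidence in the collapsed tree Γ̄. Then the twist of an admissible multidegree w at (e,v) equals the composition of the twists of w at all vertices v' lying in the connected component of v in Γ̄ ∖ {e}; and conversely, the twist at any vertex v equals the composition of the twists at (e,v) over all edges e of Γ̄ adjacent to v. Moreover, if v' is the other vertex adjacent to e, then twisting at (e,v') is inverse to twisting at (e,v). -/
namespace AdmMultideg

variable {V E : Type*} [Fintype V] [Fintype E] [DecidableEq V] [DecidableEq E]

/-- The edge `e` connects the vertices `a` and `b` (in either orientation). -/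
def between (tail head : E → V) (e : E) (a b : V) : Prop :=
  (tail e = a ∧ head e = b) ∨ (tail e = b ∧ head e = a)

instance (tail head : E → V) (e : E) (a b : V) : Decidable (between tail head e a b) :=
  inferInstanceAs (Decidable (_ ∨ _))

/-- The twist of an admissible multidegree at the incidence `(e, a)` of the collapsed
graph, where `e` is the collapsed edge joining `a` and `b`: only the `μ(ẽ)` for edges `ẽ`
lying over `e` (i.e. joining `a` and `b`) are modified, with the corresponding degree
adjustments at `a` and `b`. -/
def twistPair (tail head : E → V) (n : E → ℕ) (w : AdmMultideg V E n) (a b : V) :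
    AdmMultideg V E n where
  wG u := w.wG u
    - (if u = a then
        ((Finset.univ.filter (fun e => between tail head e a b ∧ w.mu e = 0)).card : ℤ)
      else 0)
    + (if u = b then
        ((Finset.univ.filter (fun e => between tail head e a b ∧
          w.mu e + ((sigma tail head e a : ℤ) : ZMod (n e)) = 0)).card : ℤ)
      else 0)
  mu e := if between tail head e a b then
      w.mu e + ((sigma tail head e a : ℤ) : ZMod (n e))
    else w.mu e

/-- The collapsed simple graph `Γ̄` of the multigraph: vertices adjacent when joined by
some edge. -/
def barGraph (tail head : E → V) : SimpleGraph V :=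
  SimpleGraph.fromRel (fun a b => ∃ e, tail e = a ∧ head e = b)

end AdmMultideg

set_option linter.unusedSectionVars false
namespace AdmMultideg

variable {V E : Type*} [Fintype V] [Fintype E] [DecidableEq V] [DecidableEq E]

theorem ext' {n : E → ℕ} {w w' : AdmMultideg V E n}
    (h1 : ∀ u, w.wG u = w'.wG u) (h2 : ∀ e, w.mu e = w'.mu e) : w = w' := by
  cases w; cases w'
  simp only [mk.injEq]
  exact ⟨funext h1, funext h2⟩

theorem card_filter_int {α : Type*} [Fintype α] (p : α → Prop) [DecidablePred p] :
    ((Finset.univ.filter p).card : ℤ) = ∑ x, if p x then (1 : ℤ) else 0 := by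
  rw [Finset.card_filter]
  push_cast
  rfl

theorem sum_ite_and_one {α : Type*} [Fintype α] (c : Prop) [Decidable c]
    (p : α → Prop) [DecidablePred p] :
    ∑ x, (if c ∧ p x then (1 : ℤ) else 0)
      = if c then ((Finset.univ.filter p).card : ℤ) else 0 := by
  by_cases hc : c
  · simp only [hc, true_and, if_true]
    rw [card_filter_int]
  · simp [hc]

theorem sum_ite_and_neg {α : Type*} [Fintype α] (c : Prop) [Decidable c]
    (p : α → Prop) [DecidablePred p] :
    ∑ x, (if c ∧ p x then (-1 : ℤ) else 0)
      = -(if c then ((Finset.univ.filter p).card : ℤ) else 0) := by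
  by_cases hc : c
  · simp only [hc, true_and, if_true]
    rw [card_filter_int, ← Finset.sum_neg_distrib]
    exact Finset.sum_congr rfl fun x _ => by split_ifs <;> ring
  · simp [hc]

variable (tail head : E → V) (n : E → ℕ)

theorem sigma_tail (e : E) : sigma tail head e (tail e) = 1 := by simp [sigma]

theorem sigma_head (hloop : ∀ e, tail e ≠ head e) (e : E) :
    sigma tail head e (head e) = -1 := by simp [sigma, (hloop e).symm, hloop e]

theorem sum_sigma (hloop : ∀ e, tail e ≠ head e) (e : E) (s : Finset V) :
    ∑ v ∈ s, sigma tail head e v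
      = (if tail e ∈ s then (1 : ℤ) else 0) - (if head e ∈ s then (1 : ℤ) else 0) := by
  have h : ∀ v, sigma tail head e v
      = (if tail e = v then (1 : ℤ) else 0) - (if head e = v then (1 : ℤ) else 0) := by
    intro v
    unfold sigma
    split_ifs with ht hh <;> first | omega | (exfalso; exact hloop e (ht.trans hh.symm))
  rw [Finset.sum_congr rfl (fun v _ => h v), Finset.sum_sub_distrib,
    Finset.sum_ite_eq s (tail e) (fun _ => (1:ℤ)), Finset.sum_ite_eq s (head e) (fun _ => (1:ℤ))]

theorem twist_wG (w : AdmMultideg V E n) (v u : V) :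
    (twist tail head n w v).wG u = w.wG u + ∑ e,
      ((if u = v ∧ ((tail e = v ∨ head e = v) ∧ w.mu e = 0) then (-1 : ℤ) else 0)
      + (if (tail e = v ∨ head e = v) ∧ (if tail e = v then head e else tail e) = u ∧
            w.mu e + ((sigma tail head e v : ℤ) : ZMod (n e)) = 0 then (1 : ℤ) else 0)) := by
  show w.wG u - _ + _ = _
  rw [Finset.sum_add_distrib, sum_ite_and_neg, ← card_filter_int]
  ring

theorem twistPair_wG (w : AdmMultideg V E n) (a b u : V) :
    (twistPair tail head n w a b).wG u = w.wG u + ∑ e,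
      ((if u = a ∧ (between tail head e a b ∧ w.mu e = 0) then (-1 : ℤ) else 0)
      + (if u = b ∧ (between tail head e a b ∧
            w.mu e + ((sigma tail head e a : ℤ) : ZMod (n e)) = 0) then (1 : ℤ) else 0)) := by
  show w.wG u - _ + _ = _
  rw [Finset.sum_add_distrib, sum_ite_and_neg, sum_ite_and_one]
  ring

end AdmMultideg
namespace AdmMultideg

variable {V E : Type*} [Fintype V] [Fintype E] [DecidableEq V] [DecidableEq E]
variable (tail head : E → V) (n : E → ℕ)

/-- Per-edge degree contribution of a twist at `v`, evaluated at vertex `u`. -/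
def gdelta (w : AdmMultideg V E n) (v u : V) (e : E) : ℤ :=
  (if u = v ∧ w.mu e = 0 then (-1 : ℤ) else 0)
  + (if (if tail e = v then head e else tail e) = u ∧
        w.mu e + ((sigma tail head e v : ℤ) : ZMod (n e)) = 0 then (1 : ℤ) else 0)

/-- The result of twisting `w` at all vertices of `s` (order-independent form). -/
def bigS (w : AdmMultideg V E n) (s : Finset V) : AdmMultideg V E n where
  wG u := w.wG u + ∑ e, (if tail e ∈ s ∧ head e ∉ s then gdelta tail head n w (tail e) u e
    else if head e ∈ s ∧ tail e ∉ s then gdelta tail head n w (head e) u e else 0)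
  mu e := w.mu e + (((∑ v ∈ s, sigma tail head e v) : ℤ) : ZMod (n e))

theorem bigS_wG (w : AdmMultideg V E n) (s : Finset V) (u : V) :
    (bigS tail head n w s).wG u = w.wG u
      + ∑ e, (if tail e ∈ s ∧ head e ∉ s then gdelta tail head n w (tail e) u e
        else if head e ∈ s ∧ tail e ∉ s then gdelta tail head n w (head e) u e else 0) := rfl

theorem bigS_mu (w : AdmMultideg V E n) (s : Finset V) (e : E) :
    (bigS tail head n w s).mu e
      = w.mu e + (((∑ v ∈ s, sigma tail head e v) : ℤ) : ZMod (n e)) := rfl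

theorem bigS_empty (w : AdmMultideg V E n) : bigS tail head n w ∅ = w := by
  apply ext' <;> intro x <;> simp [bigS]

theorem stepS_edge (hloop : ∀ e, tail e ≠ head e) (w : AdmMultideg V E n) (u t : V)
    (s : Finset V) (hu : u ∉ s) (e : E) :
    (if tail e ∈ s ∧ head e ∉ s then gdelta tail head n w (tail e) t e
       else if head e ∈ s ∧ tail e ∉ s then gdelta tail head n w (head e) t e else 0)
    + ((if t = u ∧ ((tail e = u ∨ head e = u) ∧ (bigS tail head n w s).mu e = 0)
          then (-1 : ℤ) else 0)
     + (if (tail e = u ∨ head e = u) ∧ (if tail e = u then head e else tail e) = t ∧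
          (bigS tail head n w s).mu e + ((sigma tail head e u : ℤ) : ZMod (n e)) = 0
          then (1 : ℤ) else 0))
    = (if tail e ∈ insert u s ∧ head e ∉ insert u s then gdelta tail head n w (tail e) t e
       else if head e ∈ insert u s ∧ tail e ∉ insert u s then gdelta tail head n w (head e) t e
       else 0) := by
  by_cases h1 : tail e = u
  · subst h1
    have h2 : head e ≠ tail e := (hloop e).symm
    have h3 : tail e ∉ s := hu
    by_cases h4 : head e ∈ s
    · have hmu : (bigS tail head n w s).mu e = w.mu e + ((-1 : ℤ) : ZMod (n e)) := by
        rw [bigS_mu, sum_sigma tail head hloop]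
        simp [h3, h4]
      rw [hmu, sigma_tail tail head e]
      have key : w.mu e + ((-1 : ℤ) : ZMod (n e)) + ((1 : ℤ) : ZMod (n e)) = w.mu e := by
        push_cast; ring
      rw [key]
      simp only [gdelta, h3, h4, h2, hloop e, Finset.mem_insert, Finset.mem_insert_self,
        if_false, if_true, eq_self_iff_true, true_or, or_true, not_true, and_true, true_and,
        and_false, false_and, if_neg (hloop e), sigma_head tail head hloop e, not_false_iff,
        or_false, eq_comm]
      push_cast
      split_ifs <;> first | norm_num | tauto
    · have hmu : (bigS tail head n w s).mu e = w.mu e := by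
        rw [bigS_mu, sum_sigma tail head hloop]
        simp [h3, h4]
      rw [hmu, sigma_tail tail head e]
      simp only [gdelta, h3, h4, h2, hloop e, Finset.mem_insert, Finset.mem_insert_self,
        if_false, if_true, eq_self_iff_true, true_or, or_true, not_true, and_true, true_and,
        and_false, false_and, if_neg (hloop e), sigma_tail tail head e, not_false_iff,
        or_false, eq_comm]
      push_cast
      split_ifs <;> first | norm_num | tauto
  · by_cases h2 : head e = u
    · subst h2
      have h4 : head e ∉ s := hu
      by_cases h3 : tail e ∈ s
      · have hmu : (bigS tail head n w s).mu e = w.mu e + ((1 : ℤ) : ZMod (n e)) := by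
          rw [bigS_mu, sum_sigma tail head hloop]
          simp [h3, h4]
        rw [hmu, sigma_head tail head hloop e]
        have key : w.mu e + ((1 : ℤ) : ZMod (n e)) + ((-1 : ℤ) : ZMod (n e)) = w.mu e := by
          push_cast; ring
        rw [key]
        simp only [gdelta, h3, h4, h1, hloop e, Finset.mem_insert, Finset.mem_insert_self,
          if_false, if_true, eq_self_iff_true, true_or, or_true, not_true, and_true, true_and,
          and_false, false_and, if_neg (hloop e), sigma_tail tail head e, not_false_iff,
          or_false, eq_comm]
        push_cast
        split_ifs <;> first | norm_num | tauto
      · have hmu : (bigS tail head n w s).mu e = w.mu e := by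
          rw [bigS_mu, sum_sigma tail head hloop]
          simp [h3, h4]
        rw [hmu, sigma_head tail head hloop e]
        simp only [gdelta, h3, h4, h1, hloop e, Finset.mem_insert, Finset.mem_insert_self,
          if_false, if_true, eq_self_iff_true, true_or, or_true, not_true, and_true, true_and,
          and_false, false_and, if_neg (hloop e), sigma_head tail head hloop e,
          not_false_iff, or_false, eq_comm]
        push_cast
        split_ifs <;> first | norm_num | tauto
    · simp [Finset.mem_insert, h1, h2]

theorem stepS (hloop : ∀ e, tail e ≠ head e) (w : AdmMultideg V E n) (u : V)
    (s : Finset V) (hu : u ∉ s) :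
    twist tail head n (bigS tail head n w s) u = bigS tail head n w (insert u s) := by
  apply ext'
  · intro t
    rw [twist_wG, bigS_wG, bigS_wG, add_assoc, ← Finset.sum_add_distrib]
    congr 1
    exact Finset.sum_congr rfl fun e _ => stepS_edge tail head n hloop w u t s hu e
  · intro e
    show (bigS tail head n w s).mu e + _ = _
    rw [bigS_mu, bigS_mu, Finset.sum_insert hu, Int.cast_add]
    ring

end AdmMultideg
namespace AdmMultideg

variable {V E : Type*} [Fintype V] [Fintype E] [DecidableEq V] [DecidableEq E]
variable (tail head : E → V) (n : E → ℕ)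

theorem between_iff {e : E} {v u : V} (huv : u ≠ v) :
    between tail head e v u ↔ (tail e = v ∨ head e = v) ∧
      (if tail e = v then head e else tail e) = u := by
  unfold between
  constructor
  · rintro (⟨h1, h2⟩ | ⟨h1, h2⟩)
    · exact ⟨Or.inl h1, by rw [if_pos h1]; exact h2⟩
    · refine ⟨Or.inr h2, ?_⟩
      rw [if_neg (fun hc => huv (h1.symm.trans hc))]
      exact h1
  · rintro ⟨h1 | h1, h2⟩
    · rw [if_pos h1] at h2
      exact Or.inl ⟨h1, h2⟩
    · by_cases hc : tail e = v
      · rw [if_pos hc] at h2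
        exact Or.inl ⟨hc, h2⟩
      · rw [if_neg hc] at h2
        exact Or.inr ⟨h2, h1⟩

/-- The result of applying incidence twists at `(v,u)` for all `u ∈ s`. -/
def bigT (w : AdmMultideg V E n) (v : V) (s : Finset V) : AdmMultideg V E n where
  wG u := w.wG u + ∑ e, (if (tail e = v ∨ head e = v) ∧
      (if tail e = v then head e else tail e) ∈ s then gdelta tail head n w v u e else 0)
  mu e := if (tail e = v ∨ head e = v) ∧ (if tail e = v then head e else tail e) ∈ s
      then w.mu e + ((sigma tail head e v : ℤ) : ZMod (n e)) else w.mu e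

theorem bigT_wG (w : AdmMultideg V E n) (v : V) (s : Finset V) (u : V) :
    (bigT tail head n w v s).wG u = w.wG u + ∑ e, (if (tail e = v ∨ head e = v) ∧
      (if tail e = v then head e else tail e) ∈ s then gdelta tail head n w v u e else 0) := rfl

theorem bigT_mu (w : AdmMultideg V E n) (v : V) (s : Finset V) (e : E) :
    (bigT tail head n w v s).mu e = if (tail e = v ∨ head e = v) ∧
      (if tail e = v then head e else tail e) ∈ s
      then w.mu e + ((sigma tail head e v : ℤ) : ZMod (n e)) else w.mu e := rfl

theorem bigT_empty (w : AdmMultideg V E n) (v : V) : bigT tail head n w v ∅ = w := by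
  apply ext' <;> intro x <;> simp [bigT]

theorem stepT (w : AdmMultideg V E n) (v u : V) (s : Finset V) (hu : u ∉ s) (huv : u ≠ v) :
    twistPair tail head n (bigT tail head n w v s) v u = bigT tail head n w v (insert u s) := by
  apply ext'
  · intro t
    rw [twistPair_wG, bigT_wG, bigT_wG, add_assoc, ← Finset.sum_add_distrib]
    congr 1
    apply Finset.sum_congr rfl
    intro e _
    by_cases hb : between tail head e v u
    · obtain ⟨hadjv, hoth⟩ := (between_iff tail head huv).mp hb
      have hos : ¬((if tail e = v then head e else tail e) ∈ s) := by rw [hoth]; exact hu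
      have hmu : (bigT tail head n w v s).mu e = w.mu e := by
        rw [bigT_mu, if_neg (fun hc => hos hc.2)]
      rw [hmu]
      by_cases h : tail e = v
      · rw [if_pos h] at hoth hos
        subst h
        subst hoth
        simp only [hb, hos, gdelta, Finset.mem_insert, Finset.mem_insert_self,
          if_false, if_true, true_and, and_true, eq_self_iff_true, true_or, or_true,
          and_false, false_and, not_true, not_false_iff, or_false, false_or, eq_comm]
        split_ifs <;> first | norm_num | tauto
      · have hh : head e = v := hadjv.resolve_left h
        rw [if_neg h] at hoth hos
        subst hh
        subst hoth
        simp only [hb, hos, h, gdelta, Finset.mem_insert, Finset.mem_insert_self,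
          if_false, if_true, true_and, and_true, eq_self_iff_true, true_or, or_true,
          and_false, false_and, not_true, not_false_iff, or_false, false_or, eq_comm]
        split_ifs <;> first | norm_num | tauto
    · by_cases hadjv : tail e = v ∨ head e = v
      · have hne : (if tail e = v then head e else tail e) ≠ u := fun h =>
          hb ((between_iff tail head huv).mpr ⟨hadjv, h⟩)
        simp [hb, Finset.mem_insert, hne]
      · simp [hb, hadjv]
  · intro e
    show (if between tail head e v u then _ else _) = _
    rw [bigT_mu, bigT_mu]
    by_cases hb : between tail head e v u
    · obtain ⟨hadjv, hoth⟩ := (between_iff tail head huv).mp hb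
      have hos : ¬((if tail e = v then head e else tail e) ∈ s) := by rw [hoth]; exact hu
      rw [if_pos hb, if_neg (fun hc => hos hc.2),
        if_pos ⟨hadjv, by rw [hoth]; exact Finset.mem_insert_self u s⟩]
    · rw [if_neg hb]
      by_cases hadjv : tail e = v ∨ head e = v
      · have hne : (if tail e = v then head e else tail e) ≠ u := fun h =>
          hb ((between_iff tail head huv).mpr ⟨hadjv, h⟩)
        simp [hadjv, Finset.mem_insert, hne]
      · simp [hadjv]

theorem sigma_other (e : E) (v : V) (h1 : tail e ≠ v) (h2 : head e ≠ v) :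
    sigma tail head e v = 0 := by simp [sigma, h1, h2]

theorem bigT_eq_twist (hloop : ∀ e, tail e ≠ head e) (w : AdmMultideg V E n) (v : V)
    (N : Finset V)
    (hN : ∀ e, (tail e = v ∨ head e = v) → (if tail e = v then head e else tail e) ∈ N) :
    bigT tail head n w v N = twist tail head n w v := by
  apply ext'
  · intro u
    rw [twist_wG, bigT_wG]
    congr 1
    apply Finset.sum_congr rfl
    intro e _
    by_cases hadjv : tail e = v ∨ head e = v
    · simp only [hadjv, hN e hadjv, and_true, true_and, if_true, gdelta]
    · simp [hadjv]
  · intro e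
    rw [bigT_mu]
    show _ = w.mu e + _
    by_cases hadjv : tail e = v ∨ head e = v
    · rw [if_pos ⟨hadjv, hN e hadjv⟩]
    · rw [if_neg (fun hc => hadjv hc.1),
        sigma_other tail head e v (fun h => hadjv (Or.inl h)) (fun h => hadjv (Or.inr h))]
      push_cast
      ring

end AdmMultideg
namespace AdmMultideg

variable {V E : Type*} [Fintype V] [Fintype E] [DecidableEq V] [DecidableEq E]
variable (tail head : E → V) (n : E → ℕ)

theorem foldS (hloop : ∀ e, tail e ≠ head e) (w : AdmMultideg V E n) (l : List V)
    (hl : l.Nodup) :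
    l.foldl (fun w' u => twist tail head n w' u) w = bigS tail head n w l.toFinset := by
  induction l using List.reverseRecOn with
  | nil => simpa using (bigS_empty tail head n w).symm
  | append_singleton l' u ih =>
    rw [List.foldl_append, List.foldl_cons, List.foldl_nil]
    rw [List.nodup_append] at hl
    obtain ⟨h1, -, h3⟩ := hl
    have hu : u ∉ l'.toFinset := by
      simp only [List.mem_toFinset]
      exact fun hmem => h3 u hmem u (List.mem_singleton_self u) rfl
    rw [ih h1, stepS tail head n hloop w u _ hu]
    congr 1
    rw [List.toFinset_append, List.toFinset_cons, List.toFinset_nil, insert_empty_eq,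
      Finset.insert_eq, Finset.union_comm]

theorem foldT (w : AdmMultideg V E n) (v : V) (l : List V) (hl : l.Nodup)
    (hlv : ∀ u ∈ l, u ≠ v) :
    l.foldl (fun w' u => twistPair tail head n w' v u) w = bigT tail head n w v l.toFinset := by
  induction l using List.reverseRecOn with
  | nil => simpa using (bigT_empty tail head n w v).symm
  | append_singleton l' u ih =>
    rw [List.foldl_append, List.foldl_cons, List.foldl_nil]
    rw [List.nodup_append] at hl
    obtain ⟨h1, -, h3⟩ := hl
    have hu : u ∉ l'.toFinset := by
      simp only [List.mem_toFinset]
      exact fun hmem => h3 u hmem u (List.mem_singleton_self u) rfl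
    have huv : u ≠ v := hlv u (by simp)
    rw [ih h1 (fun x hx => hlv x (by simp [hx])),
      stepT tail head n w v u _ hu huv]
    congr 1
    rw [List.toFinset_append, List.toFinset_cons, List.toFinset_nil, insert_empty_eq,
      Finset.insert_eq, Finset.union_comm]

theorem bigS_eq_twistPair (hloop : ∀ e, tail e ≠ head e) (w : AdmMultideg V E n)
    (a b : V) (S : Finset V) (ha : a ∈ S) (hb : b ∉ S)
    (hcross : ∀ e, ¬between tail head e a b → (tail e ∈ S ↔ head e ∈ S)) :
    bigS tail head n w S = twistPair tail head n w a b := by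
  apply ext'
  · intro u
    rw [bigS_wG, twistPair_wG]
    congr 1
    apply Finset.sum_congr rfl
    intro e _
    by_cases hbet : between tail head e a b
    · rcases hbet with ⟨h1, h2⟩ | ⟨h1, h2⟩
      · subst h1
        subst h2
        have hbet' : between tail head e (tail e) (head e) := Or.inl ⟨rfl, rfl⟩
        simp only [ha, hb, hbet', gdelta, sigma_tail, if_true, if_false, true_and, and_true,
          eq_self_iff_true, not_true, not_false_iff, eq_comm]
      · subst h1
        subst h2
        have hbet' : between tail head e (head e) (tail e) := Or.inr ⟨rfl, rfl⟩
        have h := hloop e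
        simp only [ha, hb, hbet', h, gdelta, if_true, if_false, true_and, and_true,
          eq_self_iff_true, not_true, not_false_iff, false_and, and_false, eq_comm]
    · have hh := hcross e hbet
      by_cases hts : tail e ∈ S
      · have hhs := hh.mp hts
        simp [hbet, hts, hhs]
      · have hhs : head e ∉ S := fun h => hts (hh.mpr h)
        simp [hbet, hts, hhs]
  · intro e
    rw [bigS_mu]
    show _ = if between tail head e a b then _ else _
    by_cases hbet : between tail head e a b
    · rw [if_pos hbet]
      rcases hbet with ⟨h1, h2⟩ | ⟨h1, h2⟩
      · subst h1
        subst h2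
        rw [sum_sigma tail head hloop, sigma_tail]
        simp [ha, hb]
      · subst h1
        subst h2
        rw [sum_sigma tail head hloop, sigma_head tail head hloop]
        simp [ha, hb]
    · rw [if_neg hbet, sum_sigma tail head hloop]
      have hh := hcross e hbet
      by_cases hts : tail e ∈ S
      · have hhs := hh.mp hts
        simp [hts, hhs]
      · have hhs : head e ∉ S := fun h => hts (hh.mpr h)
        simp [hts, hhs]

theorem sigma_between (hloop : ∀ e, tail e ≠ head e) {e : E} {a b : V}
    (hbet : between tail head e a b) :
    sigma tail head e a + sigma tail head e b = 0 := by
  rcases hbet with ⟨h1, h2⟩ | ⟨h1, h2⟩ <;> subst h1 <;> subst h2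
  · rw [sigma_tail, sigma_head tail head hloop]
    ring
  · rw [sigma_tail, sigma_head tail head hloop]
    ring

theorem twistPair_inv (hloop : ∀ e, tail e ≠ head e) (w : AdmMultideg V E n) (a b : V) :
    twistPair tail head n (twistPair tail head n w a b) b a = w := by
  have hcomm : ∀ e, between tail head e b a ↔ between tail head e a b := fun e => or_comm
  have key : ∀ e, between tail head e a b →
      w.mu e + ((sigma tail head e a : ℤ) : ZMod (n e))
        + ((sigma tail head e b : ℤ) : ZMod (n e)) = w.mu e := by
    intro e hbet
    have h := sigma_between tail head hloop hbet
    rw [add_assoc, ← Int.cast_add, h]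
    push_cast
    ring
  have hmu : ∀ e, (twistPair tail head n w a b).mu e
      = if between tail head e a b then
          w.mu e + ((sigma tail head e a : ℤ) : ZMod (n e)) else w.mu e := fun _ => rfl
  apply ext'
  · intro u
    rw [twistPair_wG, twistPair_wG, add_assoc, ← Finset.sum_add_distrib]
    have hz : ∀ e ∈ Finset.univ, (((if u = a ∧ (between tail head e a b ∧ w.mu e = 0)
            then (-1 : ℤ) else 0)
        + (if u = b ∧ (between tail head e a b ∧
            w.mu e + ((sigma tail head e a : ℤ) : ZMod (n e)) = 0) then (1 : ℤ) else 0))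
        + ((if u = b ∧ (between tail head e b a ∧
            (twistPair tail head n w a b).mu e = 0) then (-1 : ℤ) else 0)
        + (if u = a ∧ (between tail head e b a ∧ (twistPair tail head n w a b).mu e
            + ((sigma tail head e b : ℤ) : ZMod (n e)) = 0) then (1 : ℤ) else 0))) = 0 := by
      intro e _
      by_cases hbet : between tail head e a b
      · rw [hmu e, if_pos hbet]
        simp only [hcomm, hbet, true_and, if_true, key e hbet]
        split_ifs <;> first | norm_num | tauto
      · rw [hmu e, if_neg hbet]
        simp [hcomm, hbet]
    rw [Finset.sum_eq_zero hz, add_zero]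
  · intro e
    show (if between tail head e b a then (twistPair tail head n w a b).mu e
        + ((sigma tail head e b : ℤ) : ZMod (n e))
        else (twistPair tail head n w a b).mu e) = w.mu e
    rw [hmu e]
    by_cases hbet : between tail head e a b
    · rw [if_pos ((hcomm e).mpr hbet), if_pos hbet, key e hbet]
    · rw [if_neg (fun h => hbet ((hcomm e).mp h)), if_neg hbet]

end AdmMultideg

set_option maxHeartbeats 1000000

open AdmMultideg

/-- On a multitree (`Γ̄` is a tree): (1) the twist at an incidence `(e,a)` (with `e`
joining `a` and `b`) is the composition of the vertex twists at all vertices in the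
connected component of `a` in `Γ̄ ∖ {e}`; (2) the vertex twist at any `v` is the
composition of the incidence twists `(e,v)` over all edges `e` of `Γ̄` at `v`; and
(3) twisting at `(e,b)` is inverse to twisting at `(e,a)`. -/
theorem multitree_twistPair {V E : Type*} [Fintype V] [Fintype E] [DecidableEq V]
    [DecidableEq E] [Nonempty V] (tail head : E → V) (n : E → ℕ)
    (hn : ∀ e, 0 < n e) (hloop : ∀ e, tail e ≠ head e)
    (htree : (barGraph tail head).IsTree)
    (a b : V) (hadj : (barGraph tail head).Adj a b) :
    (∃ l : List V, l.Nodup ∧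
      (∀ u, u ∈ l ↔ ((barGraph tail head).deleteEdges {s(a, b)}).Reachable a u) ∧
      ∀ w : AdmMultideg V E n,
        l.foldl (fun w' u => twist tail head n w' u) w = twistPair tail head n w a b) ∧
    (∀ (w : AdmMultideg V E n) (v : V), ∃ l : List V, l.Nodup ∧
      (∀ u, u ∈ l ↔ (barGraph tail head).Adj v u) ∧
      l.foldl (fun w' u => twistPair tail head n w' v u) w = twist tail head n w v) ∧
    (∀ w : AdmMultideg V E n,
      twistPair tail head n (twistPair tail head n w a b) b a = w) := by
    classical
  refine ⟨?_, ?_, fun w => twistPair_inv tail head n hloop w a b⟩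
  · -- Part (1)
    refine ⟨(Finset.univ.filter fun u =>
        ((barGraph tail head).deleteEdges {s(a, b)}).Reachable a u).toList,
      Finset.nodup_toList _, fun u => ?_, fun w => ?_⟩
    · simp [Finset.mem_toList]
    · rw [foldS tail head n hloop w _ (Finset.nodup_toList _), Finset.toList_toFinset]
      have hbnr : ¬((barGraph tail head).deleteEdges {s(a, b)}).Reachable a b := by
        have hbr := SimpleGraph.isAcyclic_iff_forall_adj_isBridge.mp htree.IsAcyclic hadj
        have h2 := SimpleGraph.isBridge_iff.mp hbr
        exact h2
      apply bigS_eq_twistPair tail head n hloop w a b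
      · simp only [Finset.mem_filter, Finset.mem_univ, true_and]
        exact SimpleGraph.Reachable.refl a
      · simp only [Finset.mem_filter, Finset.mem_univ, true_and]
        exact hbnr
      · intro e hbe
        have hAdj : ((barGraph tail head).deleteEdges {s(a, b)}).Adj (tail e) (head e) := by
          rw [SimpleGraph.deleteEdges_adj]
          constructor
          · exact (SimpleGraph.fromRel_adj _ _ _).mpr ⟨hloop e, Or.inl ⟨e, rfl, rfl⟩⟩
          · simp only [Set.mem_singleton_iff, Sym2.eq_iff]
            exact fun h => hbe h
        simp only [Finset.mem_filter, Finset.mem_univ, true_and]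
        exact ⟨fun h => h.trans hAdj.reachable, fun h => h.trans hAdj.symm.reachable⟩
  · -- Part (2)
    intro w v
    refine ⟨(Finset.univ.filter fun u => (barGraph tail head).Adj v u).toList,
      Finset.nodup_toList _, fun u => ?_, ?_⟩
    · simp [Finset.mem_toList]
    · have hlv : ∀ u ∈ (Finset.univ.filter fun u => (barGraph tail head).Adj v u).toList,
          u ≠ v := by
        intro u hu
        rw [Finset.mem_toList, Finset.mem_filter] at hu
        exact hu.2.ne'
      rw [foldT tail head n w v _ (Finset.nodup_toList _) hlv, Finset.toList_toFinset]
      apply bigT_eq_twist tail head n hloop w v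
      intro e hadjv
      simp only [Finset.mem_filter, Finset.mem_univ, true_and]
      by_cases hc : tail e = v
      · rw [if_pos hc]
        exact (SimpleGraph.fromRel_adj _ _ _).mpr
          ⟨fun h => hloop e (hc.trans h), Or.inl ⟨e, hc, rfl⟩⟩
      · have hh : head e = v := hadjv.resolve_left hc
        rw [if_neg hc]
        exact (SimpleGraph.fromRel_adj _ _ _).mpr
          ⟨fun h => hloop e (h.symm.trans hh.symm), Or.inr ⟨e, rfl, hh⟩⟩
end

section
/- Let G be a finite connected loopless multigraph, v a fixed vertex, and for n ≥ 0 let Γ_{v,n} be the set of vertices at (undirected) distance at most n from v. Let N be maximal with Γ_{v,N} ⊊ V(G). Then for any multidegree w : V(G) → ℤ and the chip-firing twist operations, there exists k such that applying k simultaneous negative twists at each vertex of Γ_{v,N} makes w strictly negative at every vertex not in Γ_{v,N}, with no bound on the change inside Γ_{v,N}. -/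
open scoped Classical

/-- The simple graph underlying the multigraph with edge multiplicities `m`. -/
def underlyingGraph {V : Type*} (m : V → V → ℕ) : SimpleGraph V :=
  SimpleGraph.fromRel (fun a b => 0 < m a b)

lemma exists_walk_getVert {V : Type*} {G : SimpleGraph V} {a b : V} (p : G.Walk a b) (i : ℕ) :
    ∃ q : G.Walk a (p.getVert i), q.length ≤ i := by
  induction p generalizing i with
  | nil => exact ⟨(SimpleGraph.Walk.nil.copy rfl (by simp [SimpleGraph.Walk.getVert])), by simp⟩
  | @cons a c b h q ih =>
    cases i with
    | zero => exact ⟨(SimpleGraph.Walk.nil.copy rfl (by simp [SimpleGraph.Walk.getVert])), le_of_eq (SimpleGraph.Walk.length_copy _ _ _)⟩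
    | succ i =>
      obtain ⟨q', hq'⟩ := ih i
      exact ⟨(q'.cons h).copy rfl rfl, by simpa using hq'⟩

lemma dist_getVert_le {V : Type*} {G : SimpleGraph V} {a b : V} (p : G.Walk a b) (i : ℕ) :
    G.dist a (p.getVert i) ≤ i := by
  obtain ⟨q, hq⟩ := exists_walk_getVert p i
  exact le_trans (SimpleGraph.dist_le q) hq

/-- Let `Γ_{v,N}` be the set of vertices at distance at most `N` from `v`, with `N`
maximal such that `Γ_{v,N}` is a proper subset of the vertex set.  Then some number `k`
of simultaneous negative chip-firing twists at all vertices of `Γ_{v,N}` makes the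
multidegree `w` strictly negative at every vertex outside `Γ_{v,N}`.  (Each simultaneous
negative twist changes `w` at `u` by the valence of `u` if `u ∈ Γ_{v,N}`, minus the
number of edges from `u` into `Γ_{v,N}`.) -/
theorem negTwists_make_outside_negative {V : Type*} [Fintype V] [DecidableEq V]
    (m : V → V → ℕ) (hsymm : ∀ u v, m u v = m v u) (hloop : ∀ v, m v v = 0)
    (hconn : (underlyingGraph m).Connected)
    (v : V) (w : V → ℤ) (N : ℕ)
    (hproper : ∃ u, ¬ (underlyingGraph m).dist v u ≤ N)
    (hmax : ∀ u, (underlyingGraph m).dist v u ≤ N + 1) :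
    ∃ k : ℕ, ∀ u, ¬ (underlyingGraph m).dist v u ≤ N →
      w u + (k : ℤ) *
        ((if (underlyingGraph m).dist v u ≤ N then (valence m u : ℤ) else 0)
          - ∑ x ∈ Finset.univ.filter (fun x => (underlyingGraph m).dist v x ≤ N),
              (m u x : ℤ)) < 0 := by
  set G := underlyingGraph m
  refine ⟨(∑ u, (w u).natAbs) + 1, fun u hu => ?_⟩
  rw [if_neg hu]
  -- the sum over Γ is at least 1
  have hdist : G.dist v u = N + 1 := le_antisymm (hmax u) (by omega)
  obtain ⟨p, hp⟩ := hconn.exists_walk_length_eq_dist v u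
  have hlen : p.length = N + 1 := by rw [hp, hdist]
  set x := p.getVert N with hx
  have hxd : G.dist v x ≤ N := dist_getVert_le p N
  have hadj : G.Adj x u := by
    have := p.adj_getVert_succ (i := N) (by omega)
    rwa [show p.getVert (N+1) = u from by
      rw [← hlen]; exact p.getVert_length] at this
  have hm : 0 < m u x := by
    rcases hadj with ⟨hne, h1 | h2⟩
    · rwa [hsymm]
    · exact h2
  have hsum : (1 : ℤ) ≤ ∑ x ∈ Finset.univ.filter (fun x => G.dist v x ≤ N), (m u x : ℤ) := by
    have hmem : x ∈ Finset.univ.filter (fun x => G.dist v x ≤ N) := by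
      simp [hxd]
    calc (1 : ℤ) ≤ (m u x : ℤ) := by exact_mod_cast hm
      _ ≤ _ := Finset.single_le_sum (f := fun x => (m u x : ℤ)) (fun i _ => by positivity) hmem
  have hw : w u ≤ (∑ u, (w u).natAbs : ℤ) := by
    calc w u ≤ |w u| := le_abs_self _
      _ = ((w u).natAbs : ℤ) := (Int.abs_eq_natAbs _)
      _ ≤ _ := by
        exact_mod_cast Finset.single_le_sum (f := fun u => (w u).natAbs)
          (fun i _ => Nat.zero_le _) (Finset.mem_univ u)
  set K : ℤ := (((∑ u, (w u).natAbs) + 1 : ℕ) : ℤ) with hKdef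
  have hK : w u < K := by
    have hc : ((∑ u, (w u).natAbs : ℕ) : ℤ) = ∑ u, ((w u).natAbs : ℤ) := by push_cast; rfl
    have hK2 : K = ((∑ u, (w u).natAbs : ℕ) : ℤ) + 1 := by rw [hKdef]; push_cast; ring
    omega
  have : K * (0 - ∑ x ∈ Finset.univ.filter (fun x => G.dist v x ≤ N), (m u x : ℤ)) ≤ K * (-1) := by
    apply mul_le_mul_of_nonneg_left (by omega) (by positivity)
  linarith [this, hK]
end
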